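/- arXiv:2508.18021 — 5 statements merged into one kernel-verified Lean document; each statement's English description precedes it below -/
import Mathlib

section
/- Let W : ℂ → ℂ be an entire function with W(z+1) = W(z) for all z. Assume ∫₀¹ W(x) dx = c₀ is a real number with c₀ > 0, and that for every z ∈ ℂ with |Im z| ≤ 1 one has W(z) ≠ 0 and |Im W(z)| ≤ Re W(z). Then W has a Stokes loop; more precisely, there exists a smooth 1-periodic function f : ℝ → ℝ with |f(t)| ≤ 1 for all t such that γ(t) := t + i f(t) satisfies: γ(t+1) = γ(t) + 1, γ descends to a non-self-intersecting closed curve on ℂ/ℤ, and W(γ(t))·γ′(t) is a positive real number for every t ∈ ℝ. -/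
/-!
Let `Ψ` be a primitive of `W`. Since `∫₀¹ W` is real, `Im Ψ` is `1`-periodic, and on the strip
`|Im z| ≤ 1` it is strictly increasing in `Im z`, because `∂_y Im Ψ = Re W > 0`. The sector
condition `|Im W| ≤ Re W` forces `Im Ψ` to increase along every segment from `x' - i` to `x + i`
with `|x - x'| ≤ 1`, so by periodicity some level `c` lies strictly between the values of `Im Ψ`
on the two edges of the strip, and `{Im Ψ = c}` is the graph of a periodic `f` with `|f| ≤ 1`.
By the mean value theorem `Im (W γ') = 0` along `γ(t) = t + i f(t)`, so `f' = -Im W / Re W`;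
hence `f` is smooth and `W(γ) γ' = |W(γ)|² / Re W(γ) > 0`.
-/

open Complex Set Filter Topology Function
open scoped ContDiff

theorem exists_forall_lt_and_lt_of_periodic {g₁ g₂ : ℝ → ℝ} (hp₁ : Periodic g₁ 1)
    (hp₂ : Periodic g₂ 1) (hc₁ : Continuous g₁) (hc₂ : Continuous g₂)
    (h : ∀ x x', |x - x'| ≤ 1 → g₁ x' < g₂ x) : ∃ c, ∀ x, g₁ x < c ∧ c < g₂ x := by
  obtain ⟨x₁, hx₁, hmax⟩ := isCompact_Icc.exists_isMaxOn (nonempty_Icc.2 zero_le_one)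
    (hc₁.continuousOn (s := Icc (0 : ℝ) 1))
  obtain ⟨x₂, hx₂, hmin⟩ := isCompact_Icc.exists_isMinOn (nonempty_Icc.2 zero_le_one)
    (hc₂.continuousOn (s := Icc (0 : ℝ) 1))
  have hlt : g₁ x₁ < g₂ x₂ :=
    h x₂ x₁ (abs_sub_le_iff.2 ⟨by linarith [hx₂.2, hx₁.1], by linarith [hx₁.2, hx₂.1]⟩)
  refine ⟨(g₁ x₁ + g₂ x₂) / 2, fun x => ⟨?_, ?_⟩⟩
  · obtain ⟨y, hy, hxy⟩ := hp₁.exists_mem_Ico₀ one_pos x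
    have : g₁ y ≤ g₁ x₁ := hmax (Ico_subset_Icc_self hy)
    linarith
  · obtain ⟨y, hy, hxy⟩ := hp₂.exists_mem_Ico₀ one_pos x
    have : g₂ x₂ ≤ g₂ y := hmin (Ico_subset_Icc_self hy)
    linarith

theorem re_pos_of_abs_im_le_re {w : ℂ} (hw : w ≠ 0) (h : |w.im| ≤ w.re) : 0 < w.re := by
  refine lt_of_le_of_ne ((abs_nonneg _).trans h) fun hre => hw ?_
  have him : w.im = 0 := abs_nonpos_iff.1 (hre ▸ h)
  exact Complex.ext hre.symm him

theorem mul_one_add_I_mul_neg_im_div_re {w : ℂ} (hw : w.re ≠ 0) :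
    w * (1 + I * ↑(-w.im / w.re)) = ↑(normSq w / w.re) := by
  apply Complex.ext <;>
    simp only [mul_re, mul_im, add_re, add_im, one_re, one_im, I_re, I_im, ofReal_re, ofReal_im,
      normSq_apply] <;>
    field_simp <;> ring

theorem contDiff_infty_of_hasDerivAt {f : ℝ → ℝ} {F : ℝ × ℝ → ℝ}
    (hF : ∀ x, ContDiffAt ℝ ∞ F (x, f x)) (hf : ∀ x, HasDerivAt f (F (x, f x)) x) :
    ContDiff ℝ ∞ f := by
  have hderiv : deriv f = fun x => F (x, f x) := funext fun x => (hf x).deriv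
  refine contDiff_infty.2 fun n => ?_
  induction n with
  | zero => exact contDiff_zero.2 (continuous_iff_continuousAt.2 fun x => (hf x).continuousAt)
  | succ n ih =>
    suffices ContDiff ℝ ((n : WithTop ℕ∞) + 1) f by exact_mod_cast this
    refine contDiff_succ_iff_deriv.2 ⟨fun x => (hf x).differentiableAt, by simp, ?_⟩
    rw [hderiv, contDiff_iff_contDiffAt]
    exact fun x => ((hF x).of_le (by exact_mod_cast le_top)).comp x
      (contDiffAt_id.prodMk ih.contDiffAt)

section LevelCurve

variable {Ψ W : ℂ → ℂ}

theorem primitive_add_one (hΨ : ∀ z, HasDerivAt Ψ (W z) z) (hWc : Continuous W)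
    (hWper : ∀ z, W (z + 1) = W z) (z : ℂ) : Ψ (z + 1) = Ψ z + ∫ x in (0 : ℝ)..1, W x := by
  have hshift : ∀ z, HasDerivAt (fun z => Ψ (z + 1) - Ψ z) 0 z := fun z => by
    have h := ((hΨ (z + 1)).comp_add_const z 1).sub (hΨ z)
    rwa [hWper, sub_self] at h
  have hconst := is_const_of_deriv_eq_zero (fun z => (hshift z).differentiableAt)
    (fun z => (hshift z).deriv) z 0
  have hFTC : ∫ x in (0 : ℝ)..1, W x = Ψ 1 - Ψ 0 := by
    rw [intervalIntegral.integral_eq_sub_of_hasDerivAt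
      (fun x _ => (hΨ x).comp_ofReal) ((hWc.comp continuous_ofReal).intervalIntegrable _ _),
      ofReal_one, ofReal_zero]
  simp only [zero_add] at hconst
  rw [hFTC]
  linear_combination hconst

theorem exists_mem_segment_im_sub_eq (hΨ : ∀ z, HasDerivAt Ψ (W z) z) (z₀ z₁ : ℂ) :
    ∃ ζ ∈ segment ℝ z₀ z₁, (Ψ z₁).im - (Ψ z₀).im = (W ζ * (z₁ - z₀)).im := by
  set γ : ℝ → ℂ := fun t => z₀ + t * (z₁ - z₀)
  have hφ : ∀ t, HasDerivAt (fun t => (Ψ (γ t)).im) (W (γ t) * (z₁ - z₀)).im t := fun t => by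
    have hγ : HasDerivAt γ (z₁ - z₀) t := by
      simpa [γ] using ((hasDerivAt_id t).ofReal_comp.mul_const (z₁ - z₀)).const_add z₀
    exact imCLM.hasFDerivAt.comp_hasDerivAt t ((hΨ (γ t)).comp t hγ)
  obtain ⟨t, ht, hslope⟩ := exists_hasDerivAt_eq_slope _ _ one_pos
    (HasDerivAt.continuousOn fun t _ => hφ t) fun t _ => hφ t
  refine ⟨γ t, ?_, by simpa [γ] using hslope.symm⟩
  rw [segment_eq_image']
  exact ⟨t, Ioo_subset_Icc_self ht, by simp [γ, real_smul]⟩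

theorem exists_mem_segment_im_mul_eq_zero (hΨ : ∀ z, HasDerivAt Ψ (W z) z) {z₀ z₁ : ℂ}
    (h : (Ψ z₁).im = (Ψ z₀).im) : ∃ ζ ∈ segment ℝ z₀ z₁, (W ζ * (z₁ - z₀)).im = 0 := by
  obtain ⟨ζ, hζ, heq⟩ := exists_mem_segment_im_sub_eq hΨ z₀ z₁
  exact ⟨ζ, hζ, by rw [← heq, h, sub_self]⟩

theorem im_lt_im_of_forall_mem_segment (hΨ : ∀ z, HasDerivAt Ψ (W z) z) {z₀ z₁ : ℂ}
    (h : ∀ ζ ∈ segment ℝ z₀ z₁, 0 < (W ζ * (z₁ - z₀)).im) : (Ψ z₀).im < (Ψ z₁).im := by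
  obtain ⟨ζ, hζ, heq⟩ := exists_mem_segment_im_sub_eq hΨ z₀ z₁
  linarith [h ζ hζ]

variable {S : Set ℂ}

theorem exists_mem_segment_div_eq_of_im_eq (hΨ : ∀ z, HasDerivAt Ψ (W z) z) (hS : Convex ℝ S)
    (hW : ∀ z ∈ S, 0 < (W z).re) {z₀ z₁ : ℂ} (hz₀ : z₀ ∈ S) (hz₁ : z₁ ∈ S)
    (h : (Ψ z₁).im = (Ψ z₀).im) (hre : z₁.re ≠ z₀.re) :
    ∃ ζ ∈ segment ℝ z₀ z₁, (z₁.im - z₀.im) / (z₁.re - z₀.re) = -(W ζ).im / (W ζ).re := by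
  obtain ⟨ζ, hζ, h0⟩ := exists_mem_segment_im_mul_eq_zero hΨ h
  refine ⟨ζ, hζ, ?_⟩
  rw [mul_im, sub_re, sub_im] at h0
  rw [div_eq_div_iff (sub_ne_zero.2 hre) (hW ζ (hS.segment_subset hz₀ hz₁ hζ)).ne']
  linarith

theorem abs_im_sub_le_abs_re_sub_of_im_eq (hΨ : ∀ z, HasDerivAt Ψ (W z) z) (hS : Convex ℝ S)
    (hW : ∀ z ∈ S, 0 < (W z).re ∧ |(W z).im| ≤ (W z).re) {z₀ z₁ : ℂ} (hz₀ : z₀ ∈ S)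
    (hz₁ : z₁ ∈ S) (h : (Ψ z₁).im = (Ψ z₀).im) : |z₁.im - z₀.im| ≤ |z₁.re - z₀.re| := by
  obtain ⟨ζ, hζ, h0⟩ := exists_mem_segment_im_mul_eq_zero hΨ h
  obtain ⟨hre, him⟩ := hW ζ (hS.segment_subset hz₀ hz₁ hζ)
  rw [mul_im, sub_re, sub_im, add_eq_zero_iff_eq_neg] at h0
  refine le_of_mul_le_mul_left ?_ hre
  calc (W ζ).re * |z₁.im - z₀.im| = |(W ζ).im| * |z₁.re - z₀.re| := by
        rw [← abs_of_pos hre, ← abs_mul, ← abs_mul, h0, abs_neg]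
    _ ≤ (W ζ).re * |z₁.re - z₀.re| := by gcongr

theorem hasDerivAt_of_forall_im_eq (hΨ : ∀ z, HasDerivAt Ψ (W z) z) (hWc : Continuous W)
    (hS : Convex ℝ S) (hW : ∀ z ∈ S, 0 < (W z).re ∧ |(W z).im| ≤ (W z).re) {f : ℝ → ℝ}
    {c : ℝ} (hfS : ∀ x : ℝ, ↑x + I * ↑(f x) ∈ S) (hf : ∀ x : ℝ, (Ψ (↑x + I * ↑(f x))).im = c)
    (x₀ : ℝ) :
    HasDerivAt f (-(W (↑x₀ + I * ↑(f x₀))).im / (W (↑x₀ + I * ↑(f x₀))).re) x₀ := by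
  set z₀ : ℂ := ↑x₀ + I * ↑(f x₀)
  have hG : ContinuousAt (fun z => -(W z).im / (W z).re) z₀ :=
    ((continuous_im.comp hWc).neg.continuousAt).div (continuous_re.comp hWc).continuousAt
      (hW z₀ (hfS x₀)).1.ne'
  rw [hasDerivAt_iff_tendsto_slope, Metric.tendsto_nhdsWithin_nhds]
  intro ε hε
  obtain ⟨δ, hδ, hGδ⟩ := Metric.continuousAt_iff.1 hG ε hε
  refine ⟨δ / 2, half_pos hδ, fun x hx hxδ => ?_⟩
  have hlevel : (Ψ (↑x + I * ↑(f x))).im = (Ψ z₀).im := by rw [hf, hf]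
  obtain ⟨ζ, hζ, hslope⟩ := exists_mem_segment_div_eq_of_im_eq hΨ hS
    (fun z hz => (hW z hz).1) (hfS x₀) (hfS x) hlevel (by simpa using hx)
  have hlip : |f x - f x₀| ≤ |x - x₀| := by
    simpa using abs_im_sub_le_abs_re_sub_of_im_eq hΨ hS hW (hfS x₀) (hfS x) hlevel
  have hζz₀ : dist ζ z₀ < δ :=
    calc dist ζ z₀ ≤ dist (↑x + I * ↑(f x)) z₀ := by
          rw [dist_comm ζ, dist_comm _ z₀, ← dist_add_dist_of_mem_segment hζ]
          exact le_add_of_nonneg_right dist_nonneg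
      _ ≤ |x - x₀| + |f x - f x₀| := by
          simpa [dist_eq, z₀] using norm_le_abs_re_add_abs_im (↑x + I * ↑(f x) - z₀)
      _ < δ := by rw [Real.dist_eq] at hxδ; linarith
  simp only [add_re, ofReal_re, mul_re, I_re, ofReal_im, I_im, add_im, mul_im, zero_mul, one_mul,
    mul_zero, sub_zero, add_zero, zero_add] at hslope
  rw [slope_def_field, hslope]
  exact hGδ hζz₀

theorem convex_abs_im_le_one : Convex ℝ {z : ℂ | |z.im| ≤ 1} := by
  have h : {z : ℂ | |z.im| ≤ 1} = imLm ⁻¹' Icc (-1) 1 := by ext z; simp [abs_le]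
  rw [h]
  exact (convex_Icc _ _).linear_preimage imLm

theorem strictMonoOn_im_vertical (hΨ : ∀ z, HasDerivAt Ψ (W z) z)
    (hW : ∀ z ∈ {z : ℂ | |z.im| ≤ 1}, 0 < (W z).re) (x : ℝ) :
    StrictMonoOn (fun y : ℝ => (Ψ (↑x + I * ↑y)).im) (Icc (-1) 1) := by
  intro y hy y' hy' hlt
  refine im_lt_im_of_forall_mem_segment hΨ fun ζ hζ => ?_
  have hζ' := convex_abs_im_le_one.segment_subset (by simpa using abs_le.2 hy)
    (by simpa using abs_le.2 hy') hζ
  have : (W ζ * (↑x + I * ↑y' - (↑x + I * ↑y))).im = (y' - y) * (W ζ).re := by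
    simp only [mul_im, mul_re, sub_re, sub_im, add_re, add_im, ofReal_re, ofReal_im, I_re, I_im]
    ring
  rw [this]
  exact mul_pos (sub_pos.2 hlt) (hW ζ hζ')

theorem im_sub_I_lt_im_add_I (hΨ : ∀ z, HasDerivAt Ψ (W z) z)
    (hW : ∀ z ∈ {z : ℂ | |z.im| ≤ 1}, 0 < (W z).re ∧ |(W z).im| ≤ (W z).re) {x x' : ℝ}
    (h : |x - x'| ≤ 1) : (Ψ (↑x' - I)).im < (Ψ (↑x + I)).im := by
  refine im_lt_im_of_forall_mem_segment hΨ fun ζ hζ => ?_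
  obtain ⟨hre, him⟩ := hW ζ (convex_abs_im_le_one.segment_subset (by simp) (by simp) hζ)
  have : (W ζ * (↑x + I - (↑x' - I))).im = 2 * (W ζ).re + (W ζ).im * (x - x') := by
    simp only [mul_im, sub_re, sub_im, add_re, add_im, ofReal_re, ofReal_im, I_re, I_im]
    ring
  have hbound : |(W ζ).im * (x - x')| ≤ (W ζ).re := by
    rw [abs_mul]; nlinarith [abs_nonneg (W ζ).im, abs_nonneg (x - x')]
  rw [this]
  linarith [neg_abs_le ((W ζ).im * (x - x'))]

theorem exists_periodic_level_curve (hΨ : ∀ z, HasDerivAt Ψ (W z) z)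
    (hW : ∀ z ∈ {z : ℂ | |z.im| ≤ 1}, 0 < (W z).re ∧ |(W z).im| ≤ (W z).re)
    (hper : ∀ z, (Ψ (z + 1)).im = (Ψ z).im) :
    ∃ f : ℝ → ℝ, (∀ x, f x ∈ Icc (-1) 1) ∧ Periodic f 1 ∧
      ∃ c, ∀ x : ℝ, (Ψ (↑x + I * ↑(f x))).im = c := by
  have hcont : Continuous fun z => (Ψ z).im :=
    continuous_im.comp (continuous_iff_continuousAt.2 fun z => (hΨ z).continuousAt)
  have hper' : ∀ w : ℂ, Periodic (fun x : ℝ => (Ψ (↑x + w)).im) 1 := fun w x => by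
    simpa [add_right_comm] using hper (↑x + w)
  obtain ⟨c, hc⟩ := exists_forall_lt_and_lt_of_periodic
    (by simpa [sub_eq_add_neg] using hper' (-I)) (hper' I) (hcont.comp (by fun_prop))
    (hcont.comp (by fun_prop))
    fun x x' h => im_sub_I_lt_im_add_I hΨ hW h
  have hlevel : ∀ x : ℝ, ∃ y ∈ Icc (-1 : ℝ) 1, (Ψ (↑x + I * ↑y)).im = c := fun x =>
    intermediate_value_Icc (by norm_num) (hcont.comp (by fun_prop)).continuousOn
      ⟨by simpa [sub_eq_add_neg] using (hc x).1.le, by simpa using (hc x).2.le⟩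
  choose f hf hfc using hlevel
  refine ⟨f, hf, fun x => ?_, c, hfc⟩
  refine (strictMonoOn_im_vertical hΨ (fun z hz => (hW z hz).1) x).injOn (hf (x + 1)) (hf x) ?_
  have h := hfc (x + 1)
  rwa [ofReal_add, ofReal_one, add_right_comm, hper, ← hfc x] at h

end LevelCurve

theorem stmt1_general
    (W : ℂ → ℂ) (hW : Differentiable ℂ W) (hWper : ∀ z, W (z + 1) = W z)
    (c0 : ℝ) (hc0 : (∫ x in (0:ℝ)..1, W (x : ℂ)) = (c0 : ℂ))
    (hstrip : ∀ z : ℂ, |z.im| ≤ 1 → W z ≠ 0 ∧ |(W z).im| ≤ (W z).re) :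
    ∃ f : ℝ → ℝ, ContDiff ℝ (⊤ : ℕ∞) f ∧ (∀ t, f (t + 1) = f t) ∧ (∀ t, |f t| ≤ 1) ∧
      (∀ t : ℝ, ((t + 1 : ℝ) : ℂ) + Complex.I * (f (t + 1) : ℂ)
          = ((t : ℝ) : ℂ) + Complex.I * (f t : ℂ) + 1) ∧
      (∀ s t : ℝ, (∃ m : ℤ, (((s : ℂ) + Complex.I * (f s : ℂ))
            - ((t : ℂ) + Complex.I * (f t : ℂ))) = (m : ℂ)) →
          ∃ m : ℤ, s - t = (m : ℝ)) ∧
      (∀ t : ℝ, ∃ r : ℝ, 0 < r ∧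
        W ((t : ℂ) + Complex.I * (f t : ℂ))
          * deriv (fun s : ℝ => (s : ℂ) + Complex.I * (f s : ℂ)) t = (r : ℂ)) := by
  obtain ⟨Ψ, hΨ⟩ := hW.isExactOn_univ
  replace hΨ : ∀ z, HasDerivAt Ψ (W z) z := fun z => hΨ z (mem_univ z)
  have hsector : ∀ z ∈ {z : ℂ | |z.im| ≤ 1}, 0 < (W z).re ∧ |(W z).im| ≤ (W z).re :=
    fun z hz => ⟨re_pos_of_abs_im_le_re (hstrip z hz).1 (hstrip z hz).2, (hstrip z hz).2⟩
  obtain ⟨f, hf, hfper, c, hfc⟩ := exists_periodic_level_curve hΨ hsector fun z => by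
    rw [primitive_add_one hΨ hW.continuous hWper, hc0, add_im, ofReal_im, add_zero]
  have hfS : ∀ x : ℝ, ↑x + I * ↑(f x) ∈ {z : ℂ | |z.im| ≤ 1} := fun x => by
    simpa using abs_le.2 (hf x)
  have hf' := hasDerivAt_of_forall_im_eq hΨ hW.continuous convex_abs_im_le_one hsector hfS hfc
  refine ⟨f, ?_, hfper, fun t => abs_le.2 (hf t), fun t => ?_, ?_, fun t => ?_⟩
  · have hWγ : ContDiff ℝ ∞ fun p : ℝ × ℝ => W (↑p.1 + I * ↑p.2) :=
      (hW.contDiff.restrict_scalars ℝ).comp ((ofRealCLM.contDiff.comp contDiff_fst).add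
        (contDiff_const.mul (ofRealCLM.contDiff.comp contDiff_snd)))
    refine contDiff_infty_of_hasDerivAt (F := fun p => -(W (↑p.1 + I * ↑p.2)).im /
      (W (↑p.1 + I * ↑p.2)).re) (fun x => ?_) hf'
    exact ((imCLM.contDiff.comp hWγ).neg.contDiffAt).div (reCLM.contDiff.comp hWγ).contDiffAt
      (hsector _ (hfS x)).1.ne'
  · rw [hfper t]; push_cast; ring
  · rintro s t ⟨m, hm⟩
    exact ⟨m, by simpa using congrArg re hm⟩
  · set w := W (↑t + I * ↑(f t))
    have hw : 0 < w.re := (hsector _ (hfS t)).1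
    refine ⟨normSq w / w.re, div_pos (normSq_pos.2 fun h => by simp [h] at hw) hw, ?_⟩
    rw [← mul_one_add_I_mul_neg_im_div_re hw.ne']
    congr 1
    exact ((hasDerivAt_id t).ofReal_comp.add ((hf' t).ofReal_comp.const_mul I)).deriv

theorem stmt1
    (W : ℂ → ℂ) (hW : Differentiable ℂ W) (hWper : ∀ z, W (z + 1) = W z)
    (c0 : ℝ) (hc0 : (∫ x in (0:ℝ)..1, W (x : ℂ)) = (c0 : ℂ)) (hc0pos : 0 < c0)
    (hstrip : ∀ z : ℂ, |z.im| ≤ 1 → W z ≠ 0 ∧ |(W z).im| ≤ (W z).re) :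
    ∃ f : ℝ → ℝ, ContDiff ℝ (⊤ : ℕ∞) f ∧ (∀ t, f (t + 1) = f t) ∧ (∀ t, |f t| ≤ 1) ∧
      (∀ t : ℝ, ((t + 1 : ℝ) : ℂ) + Complex.I * (f (t + 1) : ℂ)
          = ((t : ℝ) : ℂ) + Complex.I * (f t : ℂ) + 1) ∧
      (∀ s t : ℝ, (∃ m : ℤ, (((s : ℂ) + Complex.I * (f s : ℂ))
            - ((t : ℂ) + Complex.I * (f t : ℂ))) = (m : ℂ)) →
          ∃ m : ℤ, s - t = (m : ℝ)) ∧
      (∀ t : ℝ, ∃ r : ℝ, 0 < r ∧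
        W ((t : ℂ) + Complex.I * (f t : ℂ))
          * deriv (fun s : ℝ => (s : ℂ) + Complex.I * (f s : ℂ)) t = (r : ℂ)) :=
  stmt1_general W hW hWper c0 hc0 hstrip
end

section
/- Let W : ℂ → ℂ be an entire function with W(z+1) = W(z) for all z, and let γ be a Stokes loop for W. Then the winding number of W along γ is zero: ∫₀¹ W′(γ(t))·γ′(t)/W(γ(t)) dt = 0. (Note W(γ(t)) ≠ 0 for all t since W(γ(t))γ′(t) > 0.) -/
/-!
Write `ρ = (W ∘ γ) · γ'`, so that `W'(γ) γ' / W(γ) = ρ'/ρ - γ''/γ'`. The Stokes condition puts `ρ`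
in the positive reals, where `log ρ` is a periodic primitive of `ρ'/ρ`, so the first integral
vanishes. The second is the winding number of `γ'` around `0`, and the secant slopes
`(γ(s + u) - γ(s)) / u`, `0 ≤ u ≤ 1`, deform `γ'` into the constant loop `1` without ever vanishing,
because `γ` is simple on `ℂ/ℤ`. A winding number lies in `2πiℤ` and depends continuously on the
loop, hence is unchanged along the deformation.
-/

open Complex Function intervalIntegral
open scoped Real

section LogarithmicDerivative

variable {L L' : ℝ → ℂ} {a b : ℝ}

theorem cexp_intervalIntegral_div_eq (hL : ∀ s, HasDerivAt L (L' s) s) (hL' : Continuous L')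
    (hne : ∀ s, L s ≠ 0) : cexp (∫ s in a..b, L' s / L s) = L b / L a := by
  have hcont : Continuous fun s => L' s / L s :=
    hL'.div (continuous_iff_continuousAt.2 fun s => (hL s).continuousAt) hne
  set A : ℝ → ℂ := fun t => ∫ s in a..t, L' s / L s
  have hA : ∀ t, HasDerivAt A (L' t / L t) t := fun t =>
    integral_hasDerivAt_right (hcont.intervalIntegrable _ _)
      (hcont.stronglyMeasurableAtFilter _ _) hcont.continuousAt
  have hE : ∀ t, HasDerivAt (fun t => L t * cexp (-A t)) 0 t := by
    intro t
    refine ((hL t).mul (hA t).neg.cexp).congr_deriv ?_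
    simp only [Pi.neg_apply]
    field_simp [hne t]
    ring
  have hconst := is_const_of_deriv_eq_zero (fun t => (hE t).differentiableAt)
    (fun t => (hE t).deriv) b a
  simp only [A, integral_same, neg_zero, exp_zero, mul_one, exp_neg] at hconst
  rw [eq_div_iff (hne a), ← hconst]
  field_simp [exp_ne_zero]

theorem intervalIntegral_div_mem_zmultiples (hL : ∀ s, HasDerivAt L (L' s) s)
    (hL' : Continuous L') (hne : ∀ s, L s ≠ 0) (hper : L b = L a) :
    ∫ s in a..b, L' s / L s ∈ AddSubgroup.zmultiples (2 * π * I) := by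
  have h := cexp_intervalIntegral_div_eq (a := a) (b := b) hL hL' hne
  rw [hper, div_self (hne a), exp_eq_one_iff] at h
  obtain ⟨n, hn⟩ := h
  exact ⟨n, by rw [hn, ← zsmul_eq_mul]⟩

theorem intervalIntegral_div_eq_zero_of_mem_slitPlane (hL : ∀ s, HasDerivAt L (L' s) s)
    (hL' : Continuous L') (hslit : ∀ s, L s ∈ slitPlane) (hper : L b = L a) :
    ∫ s in a..b, L' s / L s = 0 := by
  have hcont : Continuous fun s => L' s / L s :=
    hL'.div (continuous_iff_continuousAt.2 fun s => (hL s).continuousAt)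
      fun s => slitPlane_ne_zero (hslit s)
  rw [integral_eq_sub_of_hasDerivAt (fun s _ => (hL s).clog_real (hslit s))
    (hcont.intervalIntegrable _ _), hper, sub_self]

theorem intervalIntegral_div_eq_of_homotopy {H H' : ℝ → ℝ → ℂ}
    (hH : ∀ u s, HasDerivAt (H u) (H' u s) s) (hHc : Continuous (uncurry H))
    (hH'c : Continuous (uncurry H')) (hne : ∀ u s, H u s ≠ 0) (hper : ∀ u, H u b = H u a)
    (u v : ℝ) : ∫ s in a..b, H' u s / H u s = ∫ s in a..b, H' v s / H v s := by
  have hdisc : IsDiscrete (AddSubgroup.zmultiples (2 * π * I) : Set ℂ) :=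
    isDiscrete_iff_discreteTopology.2 <|
      inferInstanceAs (DiscreteTopology (AddSubgroup.zmultiples (2 * π * I)))
  refine isPreconnected_univ.constant_of_mapsTo hdisc ?_
    (fun w _ => intervalIntegral_div_mem_zmultiples (hH w)
      (hH'c.comp (continuous_const.prodMk continuous_id)) (hne w) (hper w)) trivial trivial
  exact (continuous_parametric_intervalIntegral_of_continuous'
    (hH'c.div hHc fun p => hne p.1 p.2) a b).continuousOn

end LogarithmicDerivative

section SegmentAverage

variable {E : Type*} [NormedAddCommGroup E] [NormedSpace ℝ E] [CompleteSpace E] {f f' f'' : ℝ → E}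

theorem integral_comp_add_mul_eq_smul_sub (hf : ∀ x, HasDerivAt f (f' x) x) (hf' : Continuous f')
    {u : ℝ} (hu : u ≠ 0) (s : ℝ) :
    ∫ σ in (0 : ℝ)..1, f' (s + σ * u) = u⁻¹ • (f (s + u) - f s) := by
  simp_rw [show ∀ σ, s + σ * u = u * σ + s from fun σ => by ring]
  rw [integral_comp_mul_add f' hu, mul_zero, zero_add, mul_one,
    integral_eq_sub_of_hasDerivAt (fun x _ => hf x) (hf'.intervalIntegrable _ _), add_comm]

theorem hasDerivAt_integral_comp_add_mul (hf : ∀ x, HasDerivAt f (f' x) x)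
    (hf' : ∀ x, HasDerivAt f' (f'' x) x) (hf'' : Continuous f'') (u s : ℝ) :
    HasDerivAt (fun s => ∫ σ in (0 : ℝ)..1, f' (s + σ * u))
      (∫ σ in (0 : ℝ)..1, f'' (s + σ * u)) s := by
  rcases eq_or_ne u 0 with rfl | hu
  · simpa using hf' s
  have hf'c : Continuous f' := continuous_iff_continuousAt.2 fun x => (hf' x).continuousAt
  rw [funext (integral_comp_add_mul_eq_smul_sub hf hf'c hu),
    integral_comp_add_mul_eq_smul_sub hf' hf'' hu]
  exact (((hf (s + u)).comp_add_const s u).sub (hf s)).const_smul u⁻¹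

end SegmentAverage

section StokesLoop

variable {γ : ℝ → ℂ}

theorem periodic_deriv_of_add_one (hγper : ∀ t, γ (t + 1) = γ t + 1) : Periodic (deriv γ) 1 :=
  fun t => by rw [← deriv_comp_add_const, funext hγper, deriv_add_const]

theorem sub_ne_zero_of_injective_mod_int (hγper : ∀ t, γ (t + 1) = γ t + 1)
    (hinj : ∀ s t : ℝ, (∃ m : ℤ, γ s - γ t = (m : ℂ)) → ∃ m : ℤ, s - t = (m : ℝ))
    {u : ℝ} (hu : u ≠ 0) (s : ℝ) : γ (s + u) - γ s ≠ 0 := by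
  intro h
  obtain ⟨m, hm⟩ := hinj (s + u) s ⟨0, by simpa using h⟩
  have hP : Periodic (fun t => γ t - t) 1 := fun t => by simp [hγper]
  have hu' : u = m := by linarith
  have := (hP.int_mul m) s
  simp only [mul_one, hu', ofReal_add, ofReal_intCast] at this h
  have hm0 : (m : ℂ) = 0 := by linear_combination h - this
  exact hu (by rw [hu']; exact_mod_cast hm0)

theorem intervalIntegral_deriv_deriv_div_deriv_eq_zero (hγ : ContDiff ℝ 2 γ)
    (hγper : ∀ t, γ (t + 1) = γ t + 1)
    (hinj : ∀ s t : ℝ, (∃ m : ℤ, γ s - γ t = (m : ℂ)) → ∃ m : ℤ, s - t = (m : ℝ))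
    (hne : ∀ t, deriv γ t ≠ 0) :
    ∫ t in (0 : ℝ)..1, deriv (deriv γ) t / deriv γ t = 0 := by
  have hγ' : ContDiff ℝ 1 (deriv γ) := hγ.deriv' (n := 1)
  have hγd : ∀ t, HasDerivAt γ (deriv γ t) t := fun t =>
    (hγ.differentiable two_ne_zero t).hasDerivAt
  have hγ'd : ∀ t, HasDerivAt (deriv γ) (deriv (deriv γ) t) t := fun t =>
    (hγ'.differentiable one_ne_zero t).hasDerivAt
  have hγ''c : Continuous (deriv (deriv γ)) := hγ'.continuous_deriv le_rfl
  -- `H u s` is the slope of the chord of `γ` over `[s, s + u]`, and `H' u` its derivative in `s`.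
  set H : ℝ → ℝ → ℂ := fun u s => ∫ σ in (0 : ℝ)..1, deriv γ (s + σ * u)
  set H' : ℝ → ℝ → ℂ := fun u s => ∫ σ in (0 : ℝ)..1, deriv (deriv γ) (s + σ * u)
  have hHne : ∀ u s, H u s ≠ 0 := by
    intro u s
    rcases eq_or_ne u 0 with rfl | hu
    · simpa [H] using hne s
    simp only [H]
    rw [integral_comp_add_mul_eq_smul_sub hγd hγ'.continuous hu]
    exact smul_ne_zero (inv_ne_zero hu) (sub_ne_zero_of_injective_mod_int hγper hinj hu s)
  have hHper : ∀ u, H u 1 = H u 0 := fun u => by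
    simp only [H, add_comm (1 : ℝ), periodic_deriv_of_add_one hγper _, zero_add]
  have key : ∫ s in (0 : ℝ)..1, H' 0 s / H 0 s = ∫ s in (0 : ℝ)..1, H' 1 s / H 1 s :=
    intervalIntegral_div_eq_of_homotopy
      (hasDerivAt_integral_comp_add_mul hγd hγ'd hγ''c) (by fun_prop) (by fun_prop) hHne hHper 0 1
  have hH0 : ∀ s, H 0 s = deriv γ s := by simp [H]
  have hH'0 : ∀ s, H' 0 s = deriv (deriv γ) s := by simp [H']
  have hH'1 : ∀ s, H' 1 s = 0 := fun s => by
    simp only [H']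
    rw [integral_comp_add_mul_eq_smul_sub hγ'd hγ''c one_ne_zero,
      periodic_deriv_of_add_one hγper s, sub_self, smul_zero]
  simpa only [hH0, hH'0, hH'1, zero_div, integral_zero] using key

end StokesLoop

theorem stmt2
    (W : ℂ → ℂ) (hW : Differentiable ℂ W) (hWper : ∀ z, W (z + 1) = W z)
    (γ : ℝ → ℂ) (hγ : ContDiff ℝ (⊤ : ℕ∞) γ)
    (hγper : ∀ t : ℝ, γ (t + 1) = γ t + 1)
    (hinj : ∀ s t : ℝ, (∃ m : ℤ, γ s - γ t = (m : ℂ)) → ∃ m : ℤ, s - t = (m : ℝ))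
    (hstokes : ∀ t : ℝ, ∃ r : ℝ, 0 < r ∧ W (γ t) * deriv γ t = (r : ℂ)) :
    (∫ t in (0:ℝ)..1, deriv W (γ t) * deriv γ t / W (γ t)) = 0 := by
  have hρ : ∀ t, W (γ t) * deriv γ t ∈ slitPlane := fun t => by
    obtain ⟨r, hr, he⟩ := hstokes t
    exact he ▸ ofReal_mem_slitPlane.2 hr
  have hWγ t : W (γ t) ≠ 0 := left_ne_zero_of_mul (slitPlane_ne_zero (hρ t))
  have hγ' t : deriv γ t ≠ 0 := right_ne_zero_of_mul (slitPlane_ne_zero (hρ t))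
  have hγ2 : ContDiff ℝ 2 γ := hγ.of_le (WithTop.coe_le_coe.2 le_top)
  have hγ'c : ContDiff ℝ 1 (deriv γ) := hγ2.deriv' (n := 1)
  have hγd := hγ2.differentiable two_ne_zero
  have hγ'd := hγ'c.differentiable one_ne_zero
  have hγ''c : Continuous (deriv (deriv γ)) := hγ'c.continuous_deriv le_rfl
  have hWc : Continuous W := hW.continuous
  have hW'c : Continuous (deriv W) := hW.contDiff.continuous_deriv le_top
  have hρd : ∀ t, HasDerivAt (fun t => W (γ t) * deriv γ t)
      (deriv W (γ t) * deriv γ t * deriv γ t + W (γ t) * deriv (deriv γ) t) t := fun t =>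
    ((hW (γ t)).hasDerivAt.comp t (hγd t).hasDerivAt).mul (hγ'd t).hasDerivAt
  have hρper : W (γ 1) * deriv γ 1 = W (γ 0) * deriv γ 0 := by
    rw [← zero_add (1 : ℝ), hγper, hWper, periodic_deriv_of_add_one hγper]
  have hsplit : ∀ t, deriv W (γ t) * deriv γ t / W (γ t) =
      (deriv W (γ t) * deriv γ t * deriv γ t + W (γ t) * deriv (deriv γ) t) / (W (γ t) * deriv γ t)
        - deriv (deriv γ) t / deriv γ t := fun t => by
    field_simp [hWγ t, hγ' t]
    ring
  rw [integral_congr fun t _ => hsplit t, integral_sub ?_ ?_,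
    intervalIntegral_div_eq_zero_of_mem_slitPlane hρd (by fun_prop) hρ hρper,
    intervalIntegral_deriv_deriv_div_deriv_eq_zero hγ2 hγper hinj hγ', sub_zero]
  · exact ((by fun_prop : Continuous _).div (by fun_prop) fun t =>
      slitPlane_ne_zero (hρ t)).intervalIntegrable _ _
  · exact (hγ''c.div hγ'c.continuous hγ').intervalIntegrable _ _
end

section
/- Let L > 0 and let ρ : ℝ → ℂ be a smooth map with |ρ′(t)| = 1 for all t, ρ(t + L) = ρ(t) + 1 for all t, and such that ρ(s) − ρ(t) ∈ ℤ implies s − t ∈ Lℤ (so ρ descends to a non-self-intersecting closed unit-speed curve on the cylinder ℂ/ℤ winding once around it). Then ∫₀^L ρ″(s)/ρ′(s) ds = 0; equivalently, the closed curve s ↦ ρ′(s), s ∈ [0,L], has winding number 0 around the origin. -/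
/-!
The secant curves `t ↦ (ρ (t + ε) - ρ t) / ε`, `0 ≤ ε ≤ L`, extended by `ρ'` at `ε = 0`, are
`L`-periodic and never vanish: a zero would be a self-intersection of `ρ` on the cylinder. Their
winding numbers `(2πi)⁻¹ ∫₀ᴸ ∂ₜγ / γ` are integers depending continuously on `ε`, hence constant;
at `ε = L` the secant curve is the constant `1 / L`, so the winding number of `ρ'` is zero.
-/

open Complex Function

theorem exp_integral_div_eq_div {f f' : ℝ → ℂ} (hf : ∀ t, HasDerivAt f (f' t) t)
    (hf' : Continuous f') (hne : ∀ t, f t ≠ 0) (a b : ℝ) :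
    exp (∫ t in a..b, f' t / f t) = f b / f a := by
  have hg : Continuous fun t => f' t / f t :=
    hf'.div (continuous_iff_continuousAt.2 fun t => (hf t).continuousAt) hne
  set φ : ℝ → ℂ := fun x => ∫ t in a..x, f' t / f t
  have hφ : ∀ x, HasDerivAt φ (f' x / f x) x := fun x =>
    (hg.integral_hasStrictDerivAt a x).hasDerivAt
  -- `exp (-φ) * f` has derivative `exp (-φ) * (f' - (f' / f) * f) = 0`
  have hF : ∀ x, HasDerivAt (fun x => exp (-φ x) * f x) 0 x := by
    intro x
    refine (((hφ x).neg.cexp).mul (hf x)).congr_deriv ?_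
    field_simp [hne x]
    ring
  have hconst := is_const_of_deriv_eq_zero (fun x => (hF x).differentiableAt)
    (fun x => (hF x).deriv) b a
  simp only [φ, intervalIntegral.integral_same, neg_zero, exp_zero, one_mul] at hconst
  rw [eq_div_iff (hne a), ← hconst, ← mul_assoc, ← exp_add, add_neg_cancel, exp_zero, one_mul]

theorem exp_integral_div_eq_one_of_periodic {f f' : ℝ → ℂ} {L : ℝ}
    (hf : ∀ t, HasDerivAt f (f' t) t) (hf' : Continuous f') (hne : ∀ t, f t ≠ 0)
    (hper : Periodic f L) (a : ℝ) :
    exp (∫ t in a..a + L, f' t / f t) = 1 := by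
  rw [exp_integral_div_eq_div hf hf' hne, hper a, div_self (hne a)]

theorem Continuous.eq_of_exp_eq_one {X : Type*} [TopologicalSpace X] [PreconnectedSpace X]
    {N : X → ℂ} (hN : Continuous N) (h1 : ∀ x, exp (N x) = 1) (x y : X) : N x = N y := by
  have hdisc : IsDiscrete (Set.range fun n : ℤ => ((n : ℝ) : ℂ)) :=
    (isometry_ofReal.isEmbedding.isInducing.comp
      Int.isClosedEmbedding_coe_real.isInducing).isDiscrete_range
  have hmaps : Set.MapsTo (fun x => N x / (2 * Real.pi * I)) Set.univ
      (Set.range fun n : ℤ => ((n : ℝ) : ℂ)) := by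
    intro x _
    obtain ⟨n, hn⟩ := exp_eq_one_iff.1 (h1 x)
    exact ⟨n, by simp [hn]⟩
  have := isPreconnected_univ.constant_of_mapsTo hdisc (hN.div_const _).continuousOn hmaps
    (Set.mem_univ x) (Set.mem_univ y)
  simpa [div_left_inj' two_pi_I_ne_zero] using this

/-- The difference quotient `(f (t + ε) - f t) / ε`, written as the mean of `deriv f` over
`[t, t + ε]` so that it is continuous at `ε = 0`. -/
noncomputable def meanDeriv (f : ℝ → ℂ) (ε t : ℝ) : ℂ :=
  ∫ u in (0:ℝ)..1, deriv f (t + u * ε)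

@[simp]
theorem meanDeriv_zero (f : ℝ → ℂ) (t : ℝ) : meanDeriv f 0 t = deriv f t := by
  simp [meanDeriv]

section meanDeriv

variable {f : ℝ → ℂ}

theorem meanDeriv_eq (hf : ContDiff ℝ 1 f) {ε : ℝ} (hε : ε ≠ 0) (t : ℝ) :
    meanDeriv f ε t = (ε : ℂ)⁻¹ * (f (t + ε) - f t) := by
  have hsub : ∫ u in t..t + ε, deriv f u = f (t + ε) - f t :=
    intervalIntegral.integral_deriv_eq_sub (fun x _ => hf.differentiable one_ne_zero x)
      ((hf.continuous_deriv le_rfl).intervalIntegrable _ _)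
  calc meanDeriv f ε t = ∫ u in (0:ℝ)..1, deriv f (ε * u + t) := by
        simp only [meanDeriv, add_comm t, mul_comm _ ε]
    _ = ε⁻¹ • ∫ u in ε * 0 + t..ε * 1 + t, deriv f u :=
        intervalIntegral.integral_comp_mul_add _ hε t
    _ = (ε : ℂ)⁻¹ * (f (t + ε) - f t) := by
        rw [mul_zero, zero_add, mul_one, add_comm ε t, hsub, real_smul, ofReal_inv]

theorem continuous_meanDeriv (hf : Continuous (deriv f)) : Continuous (uncurry (meanDeriv f)) :=
  intervalIntegral.continuous_parametric_intervalIntegral_of_continuous'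
    (f := fun (x : ℝ × ℝ) u => deriv f (x.2 + u * x.1)) (hf.comp (by fun_prop)) 0 1

theorem hasDerivAt_meanDeriv (hf : ContDiff ℝ 1 f) (hf' : ContDiff ℝ 1 (deriv f)) (ε t : ℝ) :
    HasDerivAt (meanDeriv f ε) (meanDeriv (deriv f) ε t) t := by
  rcases eq_or_ne ε 0 with rfl | hε
  · simp only [meanDeriv_zero, funext (meanDeriv_zero f)]
    exact (hf'.differentiable one_ne_zero t).hasDerivAt
  · rw [funext (meanDeriv_eq hf hε), meanDeriv_eq hf' hε]
    have hshift : HasDerivAt (fun s => f (s + ε)) (deriv f (t + ε)) t :=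
      (hf.differentiable one_ne_zero (t + ε)).hasDerivAt.comp_add_const t ε
    exact (hshift.sub (hf.differentiable one_ne_zero t).hasDerivAt).const_mul _

theorem periodic_meanDeriv {L : ℝ} (hper : Periodic (deriv f) L) (ε : ℝ) :
    Periodic (meanDeriv f ε) L := by
  intro t
  simp only [meanDeriv, add_right_comm t L, hper _]

theorem meanDeriv_ne_zero (hf : ContDiff ℝ 1 f) (hderiv : ∀ t, deriv f t ≠ 0)
    (hsec : ∀ ε t, ε ≠ 0 → f (t + ε) ≠ f t) (ε t : ℝ) : meanDeriv f ε t ≠ 0 := by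
  rcases eq_or_ne ε 0 with rfl | hε
  · simpa using hderiv t
  · rw [meanDeriv_eq hf hε]
    exact mul_ne_zero (inv_ne_zero (ofReal_ne_zero.2 hε)) (sub_ne_zero.2 (hsec ε t hε))

end meanDeriv

theorem periodic_deriv_of_add_const {f : ℝ → ℂ} {L : ℝ} {c : ℂ}
    (hper : ∀ t, f (t + L) = f t + c) : Periodic (deriv f) L := by
  intro t
  rw [← deriv_comp_add_const, funext hper, deriv_add_const]

theorem apply_add_ne_apply {ρ : ℝ → ℂ} {L : ℝ} (hper : ∀ t, ρ (t + L) = ρ t + 1)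
    (hinj : ∀ s t : ℝ, (∃ m : ℤ, ρ s - ρ t = (m : ℂ)) → ∃ m : ℤ, s - t = (m : ℝ) * L)
    {ε : ℝ} (hε : ε ≠ 0) (t : ℝ) : ρ (t + ε) ≠ ρ t := by
  intro h
  obtain ⟨m, hm⟩ := hinj (t + ε) t ⟨0, by simp [h]⟩
  have hεm : ε = m * L := by linarith
  have hshift := AddConstMapClass.map_add_zsmul (AddConstMap.mk ρ hper) t m
  simp only [AddConstMap.coe_mk, zsmul_eq_mul, mul_one, ← hεm, h, left_eq_add,
    Int.cast_eq_zero] at hshift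
  exact hε (by simpa [hshift] using hεm)

theorem stmt3
    (L : ℝ) (hL : 0 < L) (ρ : ℝ → ℂ) (hρ : ContDiff ℝ (⊤ : ℕ∞) ρ)
    (hunit : ∀ t : ℝ, ‖deriv ρ t‖ = 1)
    (hper : ∀ t : ℝ, ρ (t + L) = ρ t + 1)
    (hinj : ∀ s t : ℝ, (∃ m : ℤ, ρ s - ρ t = (m : ℂ)) → ∃ m : ℤ, s - t = (m : ℝ) * L) :
    (∫ s in (0:ℝ)..L, deriv (deriv ρ) s / deriv ρ s) = 0 := by
  have hρ1 : ContDiff ℝ 1 ρ := hρ.of_le (by exact_mod_cast le_top)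
  have hρ'1 : ContDiff ℝ 1 (deriv ρ) :=
    (contDiff_infty_iff_deriv.1 hρ).2.of_le (by exact_mod_cast le_top)
  have hne : ∀ ε t, meanDeriv ρ ε t ≠ 0 :=
    meanDeriv_ne_zero hρ1 (fun t => norm_ne_zero_iff.1 (by simp [hunit]))
      (fun ε t hε => apply_add_ne_apply hper hinj hε t)
  have hcont := continuous_meanDeriv (hρ1.continuous_deriv le_rfl)
  have hcont' := continuous_meanDeriv (hρ'1.continuous_deriv le_rfl)
  set N : ℝ → ℂ := fun ε => ∫ t in (0:ℝ)..L, meanDeriv (deriv ρ) ε t / meanDeriv ρ ε t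
  have hN : Continuous N :=
    intervalIntegral.continuous_parametric_intervalIntegral_of_continuous'
      (hcont'.div hcont fun x => hne x.1 x.2) 0 L
  have hexp : ∀ ε, exp (N ε) = 1 := fun ε => by
    simpa using exp_integral_div_eq_one_of_periodic (hasDerivAt_meanDeriv hρ1 hρ'1 ε)
      (hcont'.comp (Continuous.prodMk_right ε)) (hne ε)
      (periodic_meanDeriv (periodic_deriv_of_add_const hper) ε) 0
  have hNL : N L = 0 := by
    simp [N, meanDeriv_eq hρ'1 hL.ne', periodic_deriv_of_add_const hper _]
  calc (∫ s in (0:ℝ)..L, deriv (deriv ρ) s / deriv ρ s) = N 0 := by simp [N]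
    _ = N L := hN.eq_of_exp_eq_one hexp 0 L
    _ = 0 := hNL
end

section
/- Let W : ℂ → ℂ be entire, C₀ ≥ 1, and let γ : [0,1] → ℂ be smooth with γ′(t) ≠ 0 and W(γ(t)) ≠ 0 for all t. Let Φ be a holomorphic antiderivative of W on a neighbourhood of γ([0,1]) (Φ′ = W). Then there exists a constant C > 0, depending only on γ, W and C₀, such that for every h > 0, every α ∈ ℂ with C₀⁻¹ ≤ |α| ≤ C₀, and every function u holomorphic on a neighbourhood of γ([0,1]) satisfying −h²u″(z) = α²W(z)²u(z) there, the vector 𝐮(z) := (u(z), −ih u′(z)) ∈ ℂ² satisfies, for all t ∈ [0,1], |𝐮(γ(t))| ≤ C·exp(h⁻¹∫₀ᵗ |ψ′(s)| ds)·|𝐮(γ(0))|, where ψ(t) := Im(α·Φ(γ(t))). -/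
/-!
Along `γ`, the combinations `f± = h u' ∓ i α W u` diagonalise the first-order system for
`(u, -i h u')`: `d/dt f± = ∓ i γ' α W / h · f± + O(|u|)`, and `|u| ≲ |f₊| + |f₋|` because `α W`
stays away from `0` on `γ`. The real part of the diagonal coefficient is `±ψ'/h`, so the energy
`|f₊|² + |f₋|²` satisfies `E' ≤ 2 (|ψ'| / h + C) E`, and Grönwall's inequality with a variable
coefficient bounds `E`, hence `(u, -i h u')`, by `exp (h⁻¹ ∫ |ψ'|)`.
-/

noncomputable section

open Complex

open Set ComplexConjugate

theorem le_mul_exp_integral_of_hasDerivAt_le {G k : ℝ → ℝ} {a b : ℝ} (hk : Continuous k)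
    (hG : ∀ s ∈ Icc a b, ∃ G', HasDerivAt G G' s ∧ G' ≤ k s * G s) {t : ℝ} (ht : t ∈ Icc a b) :
    G t ≤ G a * Real.exp (∫ s in a..t, k s) := by
  set K : ℝ → ℝ := fun x => ∫ s in a..x, k s
  have hK : ∀ s, HasDerivAt (fun s => -K s) (-k s) s := fun s =>
    (intervalIntegral.integral_hasDerivAt_right (hk.intervalIntegrable a s)
      hk.aestronglyMeasurable.stronglyMeasurableAtFilter hk.continuousAt).neg
  set H : ℝ → ℝ := fun s => G s * Real.exp (-K s)
  have hH : ∀ s ∈ Icc a b, ∃ H', HasDerivAt H H' s ∧ H' ≤ 0 := by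
    intro s hs
    obtain ⟨G', hG', hle⟩ := hG s hs
    refine ⟨_, hG'.mul (hK s).exp, ?_⟩
    have : G' - k s * G s ≤ 0 := by linarith
    nlinarith [Real.exp_pos (-K s)]
  have hanti : AntitoneOn H (Icc a b) := by
    refine antitoneOn_of_deriv_nonpos (convex_Icc a b) (fun s hs => ?_) (fun s hs => ?_)
      (fun s hs => ?_)
    · obtain ⟨H', hH', -⟩ := hH s hs
      exact hH'.continuousAt.continuousWithinAt
    all_goals
      rw [interior_Icc] at hs
      obtain ⟨H', hH', hle⟩ := hH s (Ioo_subset_Icc_self hs)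
    · exact hH'.differentiableAt.differentiableWithinAt
    · exact hH'.deriv ▸ hle
  have hHt : H t ≤ H a := hanti ⟨le_rfl, ht.1.trans ht.2⟩ ht ht.1
  simp only [H, K, intervalIntegral.integral_same, neg_zero, Real.exp_zero, mul_one] at hHt
  calc G t = G t * Real.exp (-K t) * Real.exp (K t) := by
        rw [mul_assoc, ← Real.exp_add, neg_add_cancel, Real.exp_zero, mul_one]
    _ ≤ G a * Real.exp (K t) := by gcongr

theorem exists_hasDerivAt_norm_sq_le {F : ℝ → ℂ} {μ ρ : ℂ} {t : ℝ}
    (hF : HasDerivAt F (μ * F t + ρ) t) :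
    ∃ D, HasDerivAt (‖F ·‖ ^ 2) D t ∧ D ≤ 2 * μ.re * ‖F t‖ ^ 2 + 2 * ‖ρ‖ * ‖F t‖ := by
  refine ⟨_, hF.norm_sq, ?_⟩
  have hρ : (ρ * conj (F t)).re ≤ ‖ρ‖ * ‖F t‖ := by
    simpa only [norm_mul, RCLike.norm_conj] using re_le_norm (ρ * conj (F t))
  have : inner ℝ (F t) (μ * F t + ρ) = μ.re * ‖F t‖ ^ 2 + (ρ * conj (F t)).re := by
    rw [Complex.inner, add_mul, mul_assoc, mul_conj, add_re, normSq_eq_norm_sq, re_mul_ofReal]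
  rw [this]
  linarith

def wkbComponent (h σ : ℝ) (q u : ℂ → ℂ) (z : ℂ) : ℂ :=
  h * deriv u z - σ * I * (q z * u z)

theorem hasDerivAt_wkbComponent {h σ : ℝ} (hh : h ≠ 0) (hσ : |σ| = 1) {q u : ℂ → ℂ} {z : ℂ}
    (hq : DifferentiableAt ℂ q z) (hu : DifferentiableAt ℂ u z)
    (hu' : DifferentiableAt ℂ (deriv u) z)
    (hode : -(h : ℂ) ^ 2 * deriv (deriv u) z = q z ^ 2 * u z) :
    HasDerivAt (wkbComponent h σ q u)
      (-σ * I * q z / h * wkbComponent h σ q u z - σ * I * deriv q z * u z) z := by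
  refine ((hu'.hasDerivAt.const_mul (h : ℂ)).sub
    ((hq.hasDerivAt.mul hu.hasDerivAt).const_mul (σ * I))).congr_deriv ?_
  have hσ' : (σ : ℂ) ^ 2 = 1 := by rw [← ofReal_pow, ← sq_abs, hσ, one_pow, ofReal_one]
  have hh' : (h : ℂ) ≠ 0 := ofReal_ne_zero.mpr hh
  rw [wkbComponent]
  field_simp
  linear_combination (-1 : ℂ) * hode - (σ ^ 2 * q z ^ 2 * u z) * I_sq + (q z ^ 2 * u z) * hσ'

def cauchyData (h : ℝ) (u : ℂ → ℂ) (z : ℂ) : ℂ × ℂ := (u z, -I * h * deriv u z)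

theorem norm_cauchyData (h : ℝ) (u : ℂ → ℂ) (z : ℂ) :
    ‖cauchyData h u z‖ = max ‖u z‖ ‖h * deriv u z‖ := by
  simp [cauchyData, Prod.norm_def, mul_assoc]

def wkbEnergy (h : ℝ) (q u : ℂ → ℂ) (z : ℂ) : ℝ :=
  ‖wkbComponent h 1 q u z‖ ^ 2 + ‖wkbComponent h (-1) q u z‖ ^ 2

section Pointwise

variable (h : ℝ) (q u : ℂ → ℂ) (z : ℂ)

theorem two_mul_norm_mul_le_norm_wkbComponent_add :
    2 * (‖q z‖ * ‖u z‖) ≤ ‖wkbComponent h 1 q u z‖ + ‖wkbComponent h (-1) q u z‖ := by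
  have : wkbComponent h (-1) q u z - wkbComponent h 1 q u z = 2 * I * (q z * u z) := by
    simp only [wkbComponent]; push_cast; ring
  calc 2 * (‖q z‖ * ‖u z‖) = ‖wkbComponent h (-1) q u z - wkbComponent h 1 q u z‖ := by
        simp [this]
    _ ≤ _ := by rw [add_comm]; exact norm_sub_le _ _

theorem norm_mul_deriv_le_norm_wkbComponent_add :
    2 * ‖h * deriv u z‖ ≤ ‖wkbComponent h 1 q u z‖ + ‖wkbComponent h (-1) q u z‖ := by
  have : wkbComponent h 1 q u z + wkbComponent h (-1) q u z = 2 * (h * deriv u z) := by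
    simp only [wkbComponent]; push_cast; ring
  calc 2 * ‖h * deriv u z‖ = ‖wkbComponent h 1 q u z + wkbComponent h (-1) q u z‖ := by
        simp [this]
    _ ≤ _ := norm_add_le _ _

theorem norm_wkbComponent_le {σ : ℝ} (hσ : |σ| = 1) :
    ‖wkbComponent h σ q u z‖ ≤ (1 + ‖q z‖) * ‖cauchyData h u z‖ := by
  calc ‖wkbComponent h σ q u z‖ ≤ ‖h * deriv u z‖ + ‖q z‖ * ‖u z‖ := by
        refine (norm_sub_le _ _).trans_eq ?_
        simp [hσ]
    _ ≤ ‖cauchyData h u z‖ + ‖q z‖ * ‖cauchyData h u z‖ := by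
        rw [norm_cauchyData]; gcongr <;> simp
    _ = (1 + ‖q z‖) * ‖cauchyData h u z‖ := by ring

theorem wkbEnergy_le : wkbEnergy h q u z ≤ 2 * ((1 + ‖q z‖) * ‖cauchyData h u z‖) ^ 2 := by
  have h₁ := norm_wkbComponent_le h q u z abs_one
  have h₂ := norm_wkbComponent_le h q u z (by norm_num : |(-1 : ℝ)| = 1)
  rw [wkbEnergy]
  nlinarith [norm_nonneg (wkbComponent h 1 q u z), norm_nonneg (wkbComponent h (-1) q u z)]

variable {h q u z} in
theorem sq_norm_cauchyData_le {δ : ℝ} (hδ : 0 < δ) (hq : δ ≤ ‖q z‖) :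
    ‖cauchyData h u z‖ ^ 2 ≤ (1 + δ⁻¹) ^ 2 * wkbEnergy h q u z := by
  set P := ‖wkbComponent h 1 q u z‖
  set Q := ‖wkbComponent h (-1) q u z‖
  have hu : ‖u z‖ ≤ δ⁻¹ / 2 * (P + Q) := by
    have : 2 * δ * ‖u z‖ ≤ P + Q := by
      nlinarith [two_mul_norm_mul_le_norm_wkbComponent_add h q u z,
        norm_nonneg (u z)]
    rw [show δ⁻¹ / 2 * (P + Q) = (P + Q) / (2 * δ) by field_simp, le_div_iff₀ (by positivity)]
    linarith
  have hu' : ‖(h : ℂ) * deriv u z‖ ≤ 1 / 2 * (P + Q) := by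
    linarith [norm_mul_deriv_le_norm_wkbComponent_add h q u z]
  have hmax : ‖cauchyData h u z‖ ≤ (1 + δ⁻¹) / 2 * (P + Q) := by
    rw [norm_cauchyData]
    refine max_le (hu.trans ?_) (hu'.trans ?_) <;> gcongr <;> linarith [inv_pos.2 hδ]
  calc ‖cauchyData h u z‖ ^ 2 ≤ ((1 + δ⁻¹) / 2 * (P + Q)) ^ 2 := by gcongr
    _ ≤ (1 + δ⁻¹) ^ 2 * (P ^ 2 + Q ^ 2) := by nlinarith [sq_nonneg (P - Q), sq_nonneg (1 + δ⁻¹)]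

end Pointwise

section AlongCurve

variable {h : ℝ} {q u : ℂ → ℂ} {γ : ℝ → ℂ} {γ' : ℂ} {t : ℝ}

theorem exists_hasDerivAt_norm_sq_wkbComponent_comp_le (hh : 0 < h) {σ : ℝ} (hσ : |σ| = 1)
    (hq : DifferentiableAt ℂ q (γ t)) (hu : DifferentiableAt ℂ u (γ t))
    (hu' : DifferentiableAt ℂ (deriv u) (γ t))
    (hode : -(h : ℂ) ^ 2 * deriv (deriv u) (γ t) = q (γ t) ^ 2 * u (γ t))
    (hγ : HasDerivAt γ γ' t) :
    ∃ D, HasDerivAt (fun s => ‖wkbComponent h σ q u (γ s)‖ ^ 2) D t ∧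
      D ≤ 2 * (|(γ' * q (γ t)).im| / h) * ‖wkbComponent h σ q u (γ t)‖ ^ 2 +
        2 * (‖γ' * deriv q (γ t)‖ * ‖u (γ t)‖) * ‖wkbComponent h σ q u (γ t)‖ := by
  have hF := (hasDerivAt_wkbComponent hh.ne' hσ hq hu hu' hode).comp t hγ
  obtain ⟨D, hD, hle⟩ := exists_hasDerivAt_norm_sq_le (μ := -σ * I * (γ' * q (γ t)) / h)
    (ρ := -σ * I * (γ' * deriv q (γ t)) * u (γ t))
    (hF.congr_deriv (by rw [Function.comp_apply]; ring))
  refine ⟨D, hD, hle.trans ?_⟩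
  simp only [Function.comp_apply]
  have hre : (-σ * I * (γ' * q (γ t)) / h).re ≤ |(γ' * q (γ t)).im| / h := by
    rw [div_ofReal_re, div_le_div_iff_of_pos_right hh]
    calc _ = σ * (γ' * q (γ t)).im := by simp
      _ ≤ |σ * (γ' * q (γ t)).im| := le_abs_self _
      _ = _ := by rw [abs_mul, hσ, one_mul]
  have hρ : ‖-σ * I * (γ' * deriv q (γ t)) * u (γ t)‖ = ‖γ' * deriv q (γ t)‖ * ‖u (γ t)‖ := by
    simp [hσ]
  rw [hρ]
  gcongr

theorem exists_hasDerivAt_wkbEnergy_comp_le {δ M : ℝ} (hh : 0 < h) (hδ : 0 < δ)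
    (hq : DifferentiableAt ℂ q (γ t)) (hu : DifferentiableAt ℂ u (γ t))
    (hu' : DifferentiableAt ℂ (deriv u) (γ t))
    (hode : -(h : ℂ) ^ 2 * deriv (deriv u) (γ t) = q (γ t) ^ 2 * u (γ t))
    (hγ : HasDerivAt γ γ' t) (hqδ : δ ≤ ‖q (γ t)‖) (hM : ‖γ' * deriv q (γ t)‖ ≤ M) :
    ∃ D, HasDerivAt (fun s => wkbEnergy h q u (γ s)) D t ∧
      D ≤ 2 * (|(γ' * q (γ t)).im| / h + M / δ) * wkbEnergy h q u (γ t) := by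
  obtain ⟨D₁, hD₁, hle₁⟩ :=
    exists_hasDerivAt_norm_sq_wkbComponent_comp_le hh abs_one hq hu hu' hode hγ
  obtain ⟨D₂, hD₂, hle₂⟩ := exists_hasDerivAt_norm_sq_wkbComponent_comp_le hh
    (by norm_num : |(-1 : ℝ)| = 1) hq hu hu' hode hγ
  refine ⟨D₁ + D₂, hD₁.add hD₂, ?_⟩
  have hsep := two_mul_norm_mul_le_norm_wkbComponent_add h q u (γ t)
  rw [wkbEnergy]
  set P := ‖wkbComponent h 1 q u (γ t)‖
  set Q := ‖wkbComponent h (-1) q u (γ t)‖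
  set A := ‖u (γ t)‖
  set m := ‖γ' * deriv q (γ t)‖
  have hA : 0 ≤ A := norm_nonneg _
  have hM₀ : 0 ≤ M := (norm_nonneg _).trans hM
  have hδA : 2 * δ * A ≤ P + Q := by nlinarith [mul_le_mul_of_nonneg_right hqδ hA]
  have hcross : 2 * (m * A) * P + 2 * (m * A) * Q ≤ 2 * (M / δ) * (P ^ 2 + Q ^ 2) :=
    calc 2 * (m * A) * P + 2 * (m * A) * Q = 2 * m * A * (P + Q) := by ring
      _ ≤ 2 * M * A * (P + Q) := by gcongr
      _ = M / δ * (2 * δ * A) * (P + Q) := by field_simp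
      _ ≤ M / δ * (P + Q) * (P + Q) := by gcongr
      _ ≤ M / δ * (2 * (P ^ 2 + Q ^ 2)) := by rw [mul_assoc, ← sq]; gcongr; exact add_sq_le
      _ = 2 * (M / δ) * (P ^ 2 + Q ^ 2) := by ring
  nlinarith

theorem norm_cauchyData_comp_le {O : Set ℂ} {δ Mq M : ℝ} (hh : 0 < h) (hδ : 0 < δ)
    (hq : Differentiable ℂ q) (hγ : ContDiff ℝ 1 γ)
    (hO : IsOpen O) (hγO : γ '' Icc 0 1 ⊆ O) (hu : DifferentiableOn ℂ u O)
    (hode : ∀ z ∈ O, -(h : ℂ) ^ 2 * deriv (deriv u) z = q z ^ 2 * u z)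
    (hqδ : ∀ s ∈ Icc (0 : ℝ) 1, δ ≤ ‖q (γ s)‖) (hqM : ∀ s ∈ Icc (0 : ℝ) 1, ‖q (γ s)‖ ≤ Mq)
    (hM : ∀ s ∈ Icc (0 : ℝ) 1, ‖deriv γ s * deriv q (γ s)‖ ≤ M) (ht : t ∈ Icc (0 : ℝ) 1) :
    ‖cauchyData h u (γ t)‖ ≤ 2 * (1 + δ⁻¹) * (1 + Mq) * Real.exp (M / δ) *
      Real.exp (h⁻¹ * ∫ s in (0 : ℝ)..t, |(deriv γ s * q (γ s)).im|) *
      ‖cauchyData h u (γ 0)‖ := by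
  set κ : ℝ → ℝ := fun s => |(deriv γ s * q (γ s)).im|
  have hκ : Continuous κ :=
    (continuous_im.comp ((hγ.continuous_deriv le_rfl).mul (hq.continuous.comp hγ.continuous))).abs
  have hG : ∀ s ∈ Icc (0 : ℝ) 1, ∃ G', HasDerivAt (fun s => wkbEnergy h q u (γ s)) G' s ∧
      G' ≤ 2 * (κ s / h + M / δ) * wkbEnergy h q u (γ s) := fun s hs => by
    have hs' : O ∈ nhds (γ s) := hO.mem_nhds (hγO (mem_image_of_mem γ hs))
    exact exists_hasDerivAt_wkbEnergy_comp_le hh hδ (hq _) (hu.differentiableAt hs')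
      ((hu.deriv hO).differentiableAt hs') (hode _ (mem_of_mem_nhds hs'))
      ((hγ.differentiable one_ne_zero s).hasDerivAt) (hqδ s hs) (hM s hs)
  have hGt := le_mul_exp_integral_of_hasDerivAt_le (k := fun s => 2 * (κ s / h + M / δ))
    (by fun_prop) hG ht
  have hint : ∫ s in (0 : ℝ)..t, 2 * (κ s / h + M / δ) =
      2 * (h⁻¹ * ∫ s in (0 : ℝ)..t, κ s) + 2 * (M / δ * t) := by
    rw [intervalIntegral.integral_const_mul, intervalIntegral.integral_add
      ((hκ.div_const h).intervalIntegrable 0 t) intervalIntegrable_const,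
      intervalIntegral.integral_div, intervalIntegral.integral_const]
    simp [div_eq_inv_mul]
    ring
  rw [hint] at hGt
  have h0 : (0 : ℝ) ∈ Icc (0 : ℝ) 1 := ⟨le_rfl, zero_le_one⟩
  have hMq : 0 ≤ 1 + Mq := by linarith [(norm_nonneg _).trans (hqM 0 h0)]
  have hG0 : wkbEnergy h q u (γ 0) ≤ 2 * ((1 + Mq) * ‖cauchyData h u (γ 0)‖) ^ 2 :=
    (wkbEnergy_le h q u (γ 0)).trans (by gcongr; exact hqM 0 h0)
  set E := Real.exp (h⁻¹ * ∫ s in (0 : ℝ)..t, κ s)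
  have hexp : Real.exp (2 * (h⁻¹ * ∫ s in (0 : ℝ)..t, κ s) + 2 * (M / δ * t)) ≤
      (E * Real.exp (M / δ)) ^ 2 := by
    have hMδ : 0 ≤ M / δ := div_nonneg ((norm_nonneg _).trans (hM 0 h0)) hδ.le
    calc _ ≤ Real.exp (2 * (h⁻¹ * ∫ s in (0 : ℝ)..t, κ s) + 2 * (M / δ)) := by
          gcongr; exact mul_le_of_le_one_right hMδ ht.2
      _ = (E * Real.exp (M / δ)) ^ 2 := by rw [← Real.exp_add, sq, ← Real.exp_add]; ring_nf
  have hsq : ‖cauchyData h u (γ t)‖ ^ 2 ≤ (2 * (1 + δ⁻¹) * (1 + Mq) * Real.exp (M / δ) * E *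
      ‖cauchyData h u (γ 0)‖) ^ 2 :=
    calc ‖cauchyData h u (γ t)‖ ^ 2 ≤ (1 + δ⁻¹) ^ 2 * wkbEnergy h q u (γ t) :=
          sq_norm_cauchyData_le hδ (hqδ t ht)
      _ ≤ (1 + δ⁻¹) ^ 2 * (2 * ((1 + Mq) * ‖cauchyData h u (γ 0)‖) ^ 2 *
          (E * Real.exp (M / δ)) ^ 2) := by
        gcongr
        exact hGt.trans (mul_le_mul hG0 hexp (Real.exp_pos _).le (by positivity))
      _ ≤ 2 * ((1 + δ⁻¹) ^ 2 * (2 * ((1 + Mq) * ‖cauchyData h u (γ 0)‖) ^ 2 *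
          (E * Real.exp (M / δ)) ^ 2)) := le_mul_of_one_le_left (by positivity) one_le_two
      _ = _ := by ring
  exact (pow_le_pow_iff_left₀ (norm_nonneg _) (by positivity) two_ne_zero).1 hsq

end AlongCurve

theorem HasDerivAt.im_const_mul_comp {Φ : ℂ → ℂ} {γ : ℝ → ℂ} {w γ' : ℂ} {t : ℝ}
    (hΦ : HasDerivAt Φ w (γ t)) (hγ : HasDerivAt γ γ' t) (α : ℂ) :
    HasDerivAt (fun r => (α * Φ (γ r)).im) (γ' * (α * w)).im t := by
  refine (imCLM.hasFDerivAt.comp_hasDerivAt t ((hΦ.comp t hγ).const_mul α)).congr_deriv ?_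
  rw [imCLM_apply, mul_comm w, mul_left_comm]

theorem exists_norm_bounds_along_curve {W : ℂ → ℂ} {γ : ℝ → ℂ} (hW : Differentiable ℂ W)
    (hγ : ContDiff ℝ 1 γ) (hWγ : ∀ t ∈ Icc (0 : ℝ) 1, W (γ t) ≠ 0) :
    ∃ δ > 0, ∃ M₁ ≥ 0, ∃ M₂ : ℝ, ∀ t ∈ Icc (0 : ℝ) 1,
      δ ≤ ‖W (γ t)‖ ∧ ‖W (γ t)‖ ≤ M₁ ∧ ‖deriv γ t * deriv W (γ t)‖ ≤ M₂ := by
  have hWγc : Continuous (fun t => W (γ t)) := hW.continuous.comp hγ.continuous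
  obtain ⟨δ, hδ, hWδ⟩ := isCompact_Icc.exists_forall_le' hWγc.norm.continuousOn
    (fun t ht => norm_pos_iff.2 (hWγ t ht))
  obtain ⟨M₁, hM₁⟩ := isCompact_Icc.exists_bound_of_continuousOn hWγc.continuousOn
  obtain ⟨M₂, hM₂⟩ := isCompact_Icc.exists_bound_of_continuousOn
    ((hγ.continuous_deriv le_rfl).mul (hW.deriv.continuous.comp hγ.continuous)).continuousOn
  exact ⟨δ, hδ, M₁, (norm_nonneg _).trans (hM₁ 0 ⟨le_rfl, zero_le_one⟩), M₂,
    fun t ht => ⟨hWδ t ht, hM₁ t ht, hM₂ t ht⟩⟩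

theorem stmt4_general
    (W : ℂ → ℂ) (hW : Differentiable ℂ W)
    (C0 : ℝ) (hC0 : 1 ≤ C0)
    (γ : ℝ → ℂ) (hγ : ContDiff ℝ (⊤ : ℕ∞) γ)
    (hWγ : ∀ t ∈ Set.Icc (0:ℝ) 1, W (γ t) ≠ 0)
    (Φ : ℂ → ℂ) (U : Set ℂ) (hγU : γ '' Set.Icc (0:ℝ) 1 ⊆ U)
    (hΦ : ∀ z ∈ U, HasDerivAt Φ (W z) z) :
    ∃ C > (0:ℝ), ∀ h : ℝ, 0 < h → ∀ α : ℂ,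
      C0⁻¹ ≤ ‖α‖ → ‖α‖ ≤ C0 →
      ∀ O : Set ℂ, IsOpen O → γ '' Set.Icc (0:ℝ) 1 ⊆ O →
      ∀ u : ℂ → ℂ, DifferentiableOn ℂ u O →
        (∀ z ∈ O, -(h : ℂ) ^ 2 * deriv (deriv u) z = α ^ 2 * (W z) ^ 2 * u z) →
        ∀ t ∈ Set.Icc (0:ℝ) 1,
          ‖(u (γ t), -Complex.I * (h : ℂ) * deriv u (γ t))‖ ≤
            C * Real.exp (h⁻¹ *
                ∫ s in (0:ℝ)..t, |deriv (fun r : ℝ => (α * Φ (γ r)).im) s|) *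
              ‖(u (γ 0), -Complex.I * (h : ℂ) * deriv u (γ 0))‖ := by
  have hC0pos : 0 < C0 := one_pos.trans_le hC0
  have hγ₁ : ContDiff ℝ 1 γ := hγ.of_le (by exact_mod_cast le_top)
  obtain ⟨δ, hδ, M₁, hM₁, M₂, hbounds⟩ := exists_norm_bounds_along_curve hW hγ₁ hWγ
  refine ⟨2 * (1 + (C0⁻¹ * δ)⁻¹) * (1 + C0 * M₁) * Real.exp (C0 * M₂ / (C0⁻¹ * δ)),
    by positivity, ?_⟩
  intro h hh α hα₁ hα₂ O hO hγO u hu hode t ht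
  have key := norm_cauchyData_comp_le (q := fun z => α * W z) (δ := C0⁻¹ * δ) (Mq := C0 * M₁)
    (M := C0 * M₂) hh (by positivity)
    (hW.const_mul α) hγ₁ hO hγO hu (fun z hz => by rw [mul_pow]; exact hode z hz)
    (fun s hs => by
      rw [norm_mul]; exact mul_le_mul hα₁ (hbounds s hs).1 hδ.le (norm_nonneg _))
    (fun s hs => by
      rw [norm_mul]; exact mul_le_mul hα₂ (hbounds s hs).2.1 (norm_nonneg _) hC0pos.le)
    (fun s hs => by
      rw [deriv_const_mul _ (hW _), mul_left_comm, norm_mul]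
      exact mul_le_mul hα₂ (hbounds s hs).2.2 (norm_nonneg _) hC0pos.le)
    ht
  have hψ : ∫ s in (0 : ℝ)..t, |deriv (fun r : ℝ => (α * Φ (γ r)).im) s| =
      ∫ s in (0 : ℝ)..t, |(deriv γ s * (α * W (γ s))).im| := by
    refine intervalIntegral.integral_congr fun s hs => ?_
    rw [uIcc_of_le ht.1] at hs
    have hs' : s ∈ Icc (0 : ℝ) 1 := ⟨hs.1, hs.2.trans ht.2⟩
    rw [((hΦ _ (hγU (mem_image_of_mem γ hs'))).im_const_mul_comp
      (hγ₁.differentiable one_ne_zero s).hasDerivAt α).deriv]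
  rw [hψ]
  exact key

theorem stmt4
    (W : ℂ → ℂ) (hW : Differentiable ℂ W)
    (C0 : ℝ) (hC0 : 1 ≤ C0)
    (γ : ℝ → ℂ) (hγ : ContDiff ℝ (⊤ : ℕ∞) γ)
    (hγ' : ∀ t ∈ Set.Icc (0:ℝ) 1, deriv γ t ≠ 0)
    (hWγ : ∀ t ∈ Set.Icc (0:ℝ) 1, W (γ t) ≠ 0)
    (Φ : ℂ → ℂ) (U : Set ℂ) (hU : IsOpen U) (hγU : γ '' Set.Icc (0:ℝ) 1 ⊆ U)
    (hΦ : ∀ z ∈ U, HasDerivAt Φ (W z) z) :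
    ∃ C > (0:ℝ), ∀ h : ℝ, 0 < h → ∀ α : ℂ,
      C0⁻¹ ≤ ‖α‖ → ‖α‖ ≤ C0 →
      ∀ O : Set ℂ, IsOpen O → γ '' Set.Icc (0:ℝ) 1 ⊆ O →
      ∀ u : ℂ → ℂ, DifferentiableOn ℂ u O →
        (∀ z ∈ O, -(h : ℂ) ^ 2 * deriv (deriv u) z = α ^ 2 * (W z) ^ 2 * u z) →
        ∀ t ∈ Set.Icc (0:ℝ) 1,
          ‖(u (γ t), -Complex.I * (h : ℂ) * deriv u (γ t))‖ ≤
            C * Real.exp (h⁻¹ *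
                ∫ s in (0:ℝ)..t, |deriv (fun r : ℝ => (α * Φ (γ r)).im) s|) *
              ‖(u (γ 0), -Complex.I * (h : ℂ) * deriv u (γ 0))‖ :=
  stmt4_general W hW C0 hC0 γ hγ hWγ Φ U hγU hΦ
end
end

section
/- Let α, k ∈ ℂ with k ∉ Λ*. Suppose 𝐮 = (u₁,u₂) and 𝐯 = (v₁,v₂) are Λ-periodic smooth maps ℂ → ℂ² with D_S(α)𝐮 = 0 and D_S(α)𝐯 + k𝐯 = 0. Then the Wronskian Wr(𝐮,𝐯) := u₁v₂ − u₂v₁ vanishes identically on ℂ. -/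
noncomputable section

open Complex

/-- `ω = e^{2πi/3}`. -/
def ω : ℂ := Complex.exp (2 * Real.pi * Complex.I / 3)

/-- The hexagonal lattice `Λ = ωℤ + ℤ`. -/
def HexLat : Set ℂ := {z : ℂ | ∃ m n : ℤ, z = (m : ℂ) * ω + (n : ℂ)}

/-- The dual lattice `Λ* = {k : ⟨γ, k⟩ ∈ 2πℤ for all γ ∈ Λ}`. -/
def HexLatDual : Set ℂ :=
  {k : ℂ | ∀ γ ∈ HexLat, ∃ m : ℤ, (γ * (starRingEnd ℂ) k).re = 2 * Real.pi * (m : ℝ)}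

/-- `Λ`-periodicity. -/
def HexPer {E : Type*} (u : ℂ → E) : Prop := ∀ z : ℂ, ∀ γ ∈ HexLat, u (z + γ) = u z

/-- The operator `2 D_{z̄} = (1/i)(∂_{x₁} + i ∂_{x₂})`. -/
def Dbar (u : ℂ → ℂ) (z : ℂ) : ℂ :=
  Complex.I⁻¹ * (fderiv ℝ u z 1 + Complex.I * fderiv ℝ u z Complex.I)

/-- The scalar operator `P(α,k)u = (2D_{z̄} + k)² u − α² V u`. -/
def Pop (V : ℂ → ℂ) (α k : ℂ) (u : ℂ → ℂ) (z : ℂ) : ℂ :=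
  Dbar (fun w => Dbar u w + k * u w) z + k * (Dbar u z + k * u z) - α ^ 2 * V z * u z

/-- The system `D_S(α)(u₁,u₂) = (2D_{z̄}u₁ + αVu₂, αu₁ + 2D_{z̄}u₂)`. -/
def DS (V : ℂ → ℂ) (α : ℂ) (u : ℂ → ℂ × ℂ) (z : ℂ) : ℂ × ℂ :=
  (Dbar (fun w => (u w).1) z + α * V z * (u z).2,
   α * (u z).1 + Dbar (fun w => (u w).2) z)

/-- The set `𝒜` of magic parameters. -/
def IsMagic (V : ℂ → ℂ) (α : ℂ) : Prop :=
  ∀ k : ℂ, ∃ u : ℂ → ℂ, ContDiff ℝ (⊤ : ℕ∞) u ∧ HexPer u ∧ u ≠ 0 ∧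
    ∀ z : ℂ, Pop V α k u z = 0

/-- The standing assumptions on the potential `V`: real-analytic, `Λ`-periodic,
even, `V(ωz) = ω²V(z)`, and `conj (V (conj z)) = V z`. -/
def GoodV (V : ℂ → ℂ) : Prop :=
  (∀ z : ℂ, AnalyticAt ℝ V z) ∧ HexPer V ∧ (∀ z : ℂ, V (-z) = V z) ∧
  (∀ z : ℂ, V (ω * z) = ω ^ 2 * V z) ∧
  (∀ z : ℂ, (starRingEnd ℂ) (V ((starRingEnd ℂ) z)) = V z)

/-!
The Wronskian `W` of the two solutions is `Λ`-periodic and solves `(2D_{z̄} + k) W = 0`. Expand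
`s ↦ W (s + t ω)` in a Fourier series in `s`. The equation turns into the linear ODE
`c_n' = (2πinω - (√3/2) k) c_n` for each coefficient `c_n(t)`, while `ω`-periodicity gives
`c_n(1) = c_n(0)`. A nonzero solution would force `exp (2πinω - (√3/2) k) = 1`, i.e. `k ∈ Λ*`;
hence every `c_n` vanishes and so does `W`.
-/

open MeasureTheory Real Set
open scoped Interval

@[fun_prop]
theorem continuous_fourier_coe {T : ℝ} (n : ℤ) :
    Continuous fun s : ℝ => fourier n (s : AddCircle T) :=
  (map_continuous _).comp (AddCircle.continuous_mk' T)

theorem AddCircle.eq_zero_of_fourierCoeff_eq_zero {T : ℝ} [Fact (0 < T)]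
    {g : AddCircle T → ℂ} (hg : Continuous g) (h : ∀ n, fourierCoeff g n = 0) : g = 0 := by
  set gL := ContinuousMap.toLp (E := ℂ) 2 haarAddCircle ℂ ⟨g, hg⟩
  have hgL : (gL : AddCircle T → ℂ) =ᵐ[haarAddCircle] g :=
    ContinuousMap.coeFn_toLp (p := 2) (μ := haarAddCircle) (𝕜 := ℂ) _
  have hrepr : (fourierBasis (T := T)).repr gL = 0 := by
    ext n
    rw [fourierBasis_repr, fourierCoeff_congr_ae hgL, h n]
    rfl
  have hgL0 : gL = 0 := by simpa using congrArg (fourierBasis (T := T)).repr.symm hrepr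
  have hg0 : g =ᵐ[haarAddCircle] 0 := hgL.symm.trans (hgL0 ▸ Lp.coeFn_zero ℂ 2 haarAddCircle)
  exact (Continuous.ae_eq_iff_eq haarAddCircle hg continuous_const).mp hg0

theorem Function.Periodic.eq_zero_of_fourier_integral_eq_zero {f : ℝ → ℂ} (hf : Continuous f)
    (hper : Function.Periodic f 1)
    (h : ∀ n : ℤ, ∫ s in (0 : ℝ)..1, fourier (-n) (s : UnitAddCircle) * f s = 0) : f = 0 := by
  have hg : Continuous hper.lift := continuous_coinduced_dom.mpr hf
  have hcoeff : ∀ n, fourierCoeff hper.lift n = 0 := fun n => by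
    simpa [fourierCoeff_eq_intervalIntegral _ n 0, Function.Periodic.lift_coe] using h n
  ext s
  simpa [Function.Periodic.lift_coe] using
    congrFun (AddCircle.eq_zero_of_fourierCoeff_eq_zero hg hcoeff) s

theorem intervalIntegral.hasDerivAt_integral_of_continuous {E : Type*} [NormedAddCommGroup E]
    [NormedSpace ℝ E] {F F' : ℝ → ℝ → E} (hF : Continuous F.uncurry) (hF' : Continuous F'.uncurry)
    (hderiv : ∀ t s, HasDerivAt (F · s) (F' t s) t) (a b t₀ : ℝ) :
    HasDerivAt (fun t => ∫ s in a..b, F t s) (∫ s in a..b, F' t₀ s) t₀ := by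
  have hFt : ∀ t, Continuous (F t) := fun t => hF.comp (Continuous.prodMk_right t)
  have hF't : ∀ t, Continuous (F' t) := fun t => hF'.comp (Continuous.prodMk_right t)
  obtain ⟨C, hC⟩ := (isCompact_Icc.prod isCompact_uIcc :
    IsCompact (Icc (t₀ - 1) (t₀ + 1) ×ˢ [[a, b]])).exists_bound_of_continuousOn hF'.continuousOn
  have hbound : ∀ᵐ s ∂volume, s ∈ Ι a b → ∀ t ∈ Metric.ball t₀ 1, ‖F' t s‖ ≤ C := by
    refine .of_forall fun s hs t ht => hC (t, s) ⟨?_, uIoc_subset_uIcc hs⟩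
    rw [Metric.mem_ball, Real.dist_eq, abs_sub_lt_iff] at ht
    constructor <;> linarith
  exact (intervalIntegral.hasDerivAt_integral_of_dominated_loc_of_deriv_le
    (Metric.ball_mem_nhds t₀ one_pos) (.of_forall fun t => (hFt t).aestronglyMeasurable)
    ((hFt t₀).intervalIntegrable a b) (hF't t₀).aestronglyMeasurable hbound
    intervalIntegrable_const (.of_forall fun s _ t _ => hderiv t s)).2

theorem Complex.eq_mul_exp_of_hasDerivAt_mul {f : ℝ → ℂ} {a : ℂ}
    (hf : ∀ t, HasDerivAt f (a * f t) t) (t : ℝ) : f t = f 0 * exp (a * t) := by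
  have hconst : ∀ t, HasDerivAt (fun t : ℝ => f t * exp (-a * t)) 0 t := fun t => by
    have hexp : HasDerivAt (fun t : ℝ => exp (-a * t)) (exp (-a * t) * -a) t := by
      simpa using ((hasDerivAt_id (t : ℂ)).comp_ofReal.const_mul (-a)).cexp
    exact ((hf t).mul hexp).congr_deriv (by ring)
  have h := is_const_of_deriv_eq_zero (fun t => (hconst t).differentiableAt)
    (fun t => (hconst t).deriv) t 0
  simp only [ofReal_zero, mul_zero, exp_zero, mul_one] at h
  rw [← h, mul_assoc, ← exp_add, neg_mul, neg_add_cancel, exp_zero, mul_one]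

theorem Dbar_mul {f g : ℂ → ℂ} {z : ℂ} (hf : DifferentiableAt ℝ f z)
    (hg : DifferentiableAt ℝ g z) :
    Dbar (fun w => f w * g w) z = Dbar f z * g z + f z * Dbar g z := by
  simp only [Dbar, fderiv_fun_mul hf hg, add_apply, smul_apply, smul_eq_mul]
  ring

theorem Dbar_sub {f g : ℂ → ℂ} {z : ℂ} (hf : DifferentiableAt ℝ f z)
    (hg : DifferentiableAt ℝ g z) :
    Dbar (fun w => f w - g w) z = Dbar f z - Dbar g z := by
  simp only [Dbar, fderiv_fun_sub hf hg, sub_apply]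
  ring

theorem fderiv_apply_eq_of_Dbar_add_mul_eq_zero {W : ℂ → ℂ} {k z : ℂ}
    (h : Dbar W z + k * W z = 0) (τ : ℂ) :
    fderiv ℝ W z τ = τ * fderiv ℝ W z 1 - τ.im * k * W z := by
  have hsplit : fderiv ℝ W z τ = τ.re * fderiv ℝ W z 1 + τ.im * fderiv ℝ W z I := by
    have hτ : τ = τ.re • (1 : ℂ) + τ.im • I := by simp [Complex.real_smul]
    conv_lhs => rw [hτ, map_add, map_smul, map_smul]
    simp only [Complex.real_smul]
  rw [Dbar, inv_I] at h
  linear_combination hsplit + (τ.im : ℂ) * h + (τ.im * fderiv ℝ W z I) * I_mul_I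
    + fderiv ℝ W z 1 * re_add_im τ

def horizontalFourierCoeff (W : ℂ → ℂ) (n : ℤ) (w : ℂ) : ℂ :=
  ∫ s in (0 : ℝ)..1, fourier (-n) (s : UnitAddCircle) * W (s + w)

section horizontalFourierCoeff

variable {W : ℂ → ℂ} (hW : ContDiff ℝ 1 W)
include hW

theorem integral_fourier_mul_fderiv_one (h1 : ∀ z, W (z + 1) = W z) (n : ℤ) (w : ℂ) :
    ∫ s in (0 : ℝ)..1, fourier (-n) (s : UnitAddCircle) * fderiv ℝ W (s + w) 1
      = 2 * π * I * n * horizontalFourierCoeff W n w := by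
  have hline : ∀ s : ℝ, HasDerivAt (fun s : ℝ => W (s + w)) (fderiv ℝ W (s + w) 1) s := fun s =>
    (hW.differentiable one_ne_zero _).hasFDerivAt.comp_hasDerivAt s ((hasDerivAt_id (s : ℂ)).comp_ofReal.add_const w)
  have hW'_cont := hW.continuous_fderiv one_ne_zero
  have hparts := intervalIntegral.integral_mul_deriv_eq_deriv_mul
    (fun s _ => hasDerivAt_fourier_neg 1 n s) (fun s _ => hline s)
    (Continuous.intervalIntegrable (by fun_prop) 0 1)
    (Continuous.intervalIntegrable (by fun_prop) 0 1)
  have hend : fourier (-n) ((1 : ℝ) : UnitAddCircle) = fourier (-n) ((0 : ℝ) : UnitAddCircle) := by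
    rw [AddCircle.coe_period, AddCircle.coe_zero]
  rw [hparts, hend, ofReal_one, ofReal_zero, zero_add, add_comm, h1,
    horizontalFourierCoeff, ← intervalIntegral.integral_const_mul]
  simp only [sub_self, zero_sub, ← intervalIntegral.integral_neg]
  congr 1 with s
  ring

theorem hasDerivAt_horizontalFourierCoeff_mul (n : ℤ) (τ : ℂ) (t₀ : ℝ) :
    HasDerivAt (fun t : ℝ => horizontalFourierCoeff W n (t * τ))
      (∫ s in (0 : ℝ)..1, fourier (-n) (s : UnitAddCircle) * fderiv ℝ W (s + t₀ * τ) τ) t₀ := by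
  have hW_cont := hW.continuous
  have hW'_cont := hW.continuous_fderiv one_ne_zero
  refine intervalIntegral.hasDerivAt_integral_of_continuous
    (F := fun t s => fourier (-n) (s : UnitAddCircle) * W (s + t * τ))
    (F' := fun t s => fourier (-n) (s : UnitAddCircle) * fderiv ℝ W (s + t * τ) τ)
    (by fun_prop) (by fun_prop) (fun t s => ?_) 0 1 t₀
  have hmove : HasDerivAt (fun t : ℝ => (s : ℂ) + t * τ) τ t := by
    simpa using ((hasDerivAt_id (t : ℂ)).comp_ofReal.mul_const τ).const_add (s : ℂ)
  exact (((hW.differentiable one_ne_zero _).hasFDerivAt.comp_hasDerivAt t hmove).const_mul _)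

theorem hasDerivAt_horizontalFourierCoeff_of_Dbar {k : ℂ} (h1 : ∀ z, W (z + 1) = W z)
    (hpde : ∀ z, Dbar W z + k * W z = 0) (n : ℤ) (τ : ℂ) (t₀ : ℝ) :
    HasDerivAt (fun t : ℝ => horizontalFourierCoeff W n (t * τ))
      ((2 * π * I * n * τ - τ.im * k) * horizontalFourierCoeff W n (t₀ * τ)) t₀ := by
  convert hasDerivAt_horizontalFourierCoeff_mul hW n τ t₀ using 1
  have hW_cont := hW.continuous
  have hW'_cont := hW.continuous_fderiv one_ne_zero
  have hintegrand : ∀ s : ℝ, fourier (-n) (s : UnitAddCircle) * fderiv ℝ W (s + t₀ * τ) τ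
      = τ * (fourier (-n) (s : UnitAddCircle) * fderiv ℝ W (s + t₀ * τ) 1)
        - τ.im * k * (fourier (-n) (s : UnitAddCircle) * W (s + t₀ * τ)) := fun s => by
    rw [fderiv_apply_eq_of_Dbar_add_mul_eq_zero (hpde _) τ]
    ring
  simp_rw [hintegrand]
  rw [intervalIntegral.integral_sub, intervalIntegral.integral_const_mul,
    intervalIntegral.integral_const_mul, integral_fourier_mul_fderiv_one hW h1,
    horizontalFourierCoeff]
  · ring
  all_goals exact Continuous.intervalIntegrable (by fun_prop) 0 1

end horizontalFourierCoeff

theorem eq_zero_of_Dbar_add_mul_eq_zero {W : ℂ → ℂ} {k τ : ℂ} (hW : ContDiff ℝ 1 W)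
    (h1 : ∀ z, W (z + 1) = W z) (hτ : ∀ z, W (z + τ) = W z) (hτ_im : τ.im ≠ 0)
    (hk : ∀ n : ℤ, exp (2 * π * I * n * τ - τ.im * k) ≠ 1)
    (hpde : ∀ z, Dbar W z + k * W z = 0) : W = 0 := by
  have hcoeff : ∀ (n : ℤ) (t : ℝ), horizontalFourierCoeff W n (t * τ) = 0 := by
    intro n t
    have hode := Complex.eq_mul_exp_of_hasDerivAt_mul
      (hasDerivAt_horizontalFourierCoeff_of_Dbar hW h1 hpde n τ)
    have hper : horizontalFourierCoeff W n 0 * exp (2 * π * I * n * τ - τ.im * k)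
        = horizontalFourierCoeff W n 0 := by
      simpa [horizontalFourierCoeff, ← add_assoc, hτ] using (hode 1).symm
    have h0 : horizontalFourierCoeff W n 0 = 0 := by
      by_contra hne
      exact hk n (mul_eq_left₀ hne |>.mp hper)
    simpa [h0] using hode t
  funext z
  set t := z.im / τ.im
  have hz : z = (z.re - t * τ.re : ℝ) + t * τ := by
    apply Complex.ext <;> simp [t, hτ_im]
  have hline := Function.Periodic.eq_zero_of_fourier_integral_eq_zero
    (f := fun s : ℝ => W (s + t * τ)) (by fun_prop) (fun s => by simpa [add_right_comm] using h1 _)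
    (fun n => hcoeff n t)
  rw [hz]
  exact congrFun hline _

theorem omega_eq : ω = (-(1 / 2) : ℝ) + (√3 / 2 : ℝ) * I := by
  rw [ω, show 2 * π * I / 3 = ((2 * π / 3 : ℝ) : ℂ) * I by push_cast; ring, exp_mul_I,
    ← ofReal_cos, ← ofReal_sin, show 2 * π / 3 = π - π / 3 by ring, Real.cos_pi_sub,
    Real.sin_pi_sub, cos_pi_div_three, sin_pi_div_three]

theorem omega_re : ω.re = -(1 / 2) := by simp [omega_eq]

theorem omega_im : ω.im = √3 / 2 := by simp [omega_eq]

theorem one_mem_hexLat : (1 : ℂ) ∈ HexLat := ⟨0, 1, by simp⟩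

theorem omega_mem_hexLat : ω ∈ HexLat := ⟨1, 0, by simp⟩

theorem mem_hexLatDual_of_exp_eq_one {k : ℂ} {n : ℤ}
    (h : exp (2 * π * I * n * ω - ω.im * k) = 1) : k ∈ HexLatDual := by
  obtain ⟨m, hm⟩ := exp_eq_one_iff.mp h
  have hre := congrArg re hm
  have him := congrArg im hm
  simp only [sub_re, sub_im, mul_re, mul_im, ofReal_re, ofReal_im, I_re, I_im, intCast_re,
    intCast_im, omega_re, omega_im, re_ofNat, im_ofNat] at hre him
  have hsqrt3 : √3 ≠ 0 := by positivity
  have hk_re : k.re = -(2 * π * n) := by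
    apply mul_left_cancel₀ hsqrt3
    linear_combination (-2 : ℝ) * hre
  rintro γ ⟨p, q, rfl⟩
  refine ⟨-(q * n + p * m), ?_⟩
  simp only [mul_re, add_re, add_im, conj_re, conj_im, mul_im, intCast_re, intCast_im, omega_re,
    omega_im]
  push_cast
  linear_combination (q - p / 2 : ℝ) * hk_re - p * him

def wronskian (u v : ℂ → ℂ × ℂ) (z : ℂ) : ℂ := (u z).1 * (v z).2 - (u z).2 * (v z).1

theorem Dbar_wronskian_add_mul_eq_zero {V : ℂ → ℂ} {α k z : ℂ} {u v : ℂ → ℂ × ℂ}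
    (hu : DifferentiableAt ℝ u z) (hv : DifferentiableAt ℝ v z) (hueq : DS V α u z = 0)
    (hveq : DS V α v z + k • v z = 0) :
    Dbar (wronskian u v) z + k * wronskian u v z = 0 := by
  have hu₁ := congrArg Prod.fst hueq
  have hu₂ := congrArg Prod.snd hueq
  have hv₁ := congrArg Prod.fst hveq
  have hv₂ := congrArg Prod.snd hveq
  simp only [DS, Prod.fst_add, Prod.snd_add, Prod.smul_fst, Prod.smul_snd, smul_eq_mul,
    Prod.fst_zero, Prod.snd_zero] at hu₁ hu₂ hv₁ hv₂
  rw [show wronskian u v = fun w => (u w).1 * (v w).2 - (u w).2 * (v w).1 from rfl,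
    Dbar_sub (hu.fst.fun_mul hv.snd) (hu.snd.fun_mul hv.fst), Dbar_mul hu.fst hv.snd,
    Dbar_mul hu.snd hv.fst]
  linear_combination (v z).2 * hu₁ - (v z).1 * hu₂ - (u z).2 * hv₁ + (u z).1 * hv₂

theorem wronskian_periodic {u v : ℂ → ℂ × ℂ} (hu : HexPer u) (hv : HexPer v) {γ : ℂ}
    (hγ : γ ∈ HexLat) (z : ℂ) : wronskian u v (z + γ) = wronskian u v z := by
  simp only [wronskian, hu z γ hγ, hv z γ hγ]

theorem stmt10_general (V : ℂ → ℂ) (α k : ℂ) (hk : k ∉ HexLatDual)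
    (u v : ℂ → ℂ × ℂ)
    (hu : ContDiff ℝ (⊤ : ℕ∞) u) (hup : HexPer u)
    (hv : ContDiff ℝ (⊤ : ℕ∞) v) (hvp : HexPer v)
    (hueq : ∀ z : ℂ, DS V α u z = 0)
    (hveq : ∀ z : ℂ, DS V α v z + k • v z = 0) :
    ∀ z : ℂ, (u z).1 * (v z).2 - (u z).2 * (v z).1 = 0 := by
  have hu₁ : ContDiff ℝ 1 u := hu.of_le (by exact_mod_cast le_top)
  have hv₁ : ContDiff ℝ 1 v := hv.of_le (by exact_mod_cast le_top)
  have hW : ContDiff ℝ 1 (wronskian u v) :=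
    (hu₁.fst.mul hv₁.snd).sub (hu₁.snd.mul hv₁.fst)
  have hW_zero := eq_zero_of_Dbar_add_mul_eq_zero hW
    (wronskian_periodic hup hvp one_mem_hexLat) (wronskian_periodic hup hvp omega_mem_hexLat)
    (by rw [omega_im]; positivity) (fun n h => hk (mem_hexLatDual_of_exp_eq_one h))
    (fun z => Dbar_wronskian_add_mul_eq_zero (hu₁.differentiable one_ne_zero z)
      (hv₁.differentiable one_ne_zero z) (hueq z) (hveq z))
  exact congrFun hW_zero

theorem stmt10 (V : ℂ → ℂ) (hV : GoodV V) (α k : ℂ) (hk : k ∉ HexLatDual)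
    (u v : ℂ → ℂ × ℂ)
    (hu : ContDiff ℝ (⊤ : ℕ∞) u) (hup : HexPer u)
    (hv : ContDiff ℝ (⊤ : ℕ∞) v) (hvp : HexPer v)
    (hueq : ∀ z : ℂ, DS V α u z = 0)
    (hveq : ∀ z : ℂ, DS V α v z + k • v z = 0) :
    ∀ z : ℂ, (u z).1 * (v z).2 - (u z).2 * (v z).1 = 0 :=
  stmt10_general V α k hk u v hu hup hv hvp hueq hveq
end
end
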